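/- arXiv:2410.13356 — 9 statements merged into one kernel-verified Lean document; each statement's English description precedes it below -/
import Mathlib

section
/- Let n ≥ 1, let Ω ⊂ ℝⁿ be a nonempty bounded open set and let β > 0. Then 1/s_β(Ω) equals the infimum, over all Lipschitz functions w on the closure of Ω such that sup_Ω w⁺ = sup_Ω w⁻ > 0, of the quotient max{Lip(w), β·sup_{∂Ω}|w|} / sup_Ω |w|, where w⁺ = max(w,0) and w⁻ = max(−w,0). (This is the variational characterization λ_{2,∞}(Ω) = inf_{w ∈ 𝒪} max{‖∇w‖_{L∞(Ω)}, β‖w‖_{L∞(∂Ω)}}/‖w‖_{L∞(Ω)} over the class 𝒪 of functions whose positive and negative parts have equal sup norm.) -/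
open Set Metric

/-- The normalized cone of height 1 and base radius `t` centered at `x`. -/
noncomputable def cone {n : ℕ} (x : EuclideanSpace ℝ (Fin n)) (t : ℝ)
    (y : EuclideanSpace ℝ (Fin n)) : ℝ :=
  max (t - ‖y - x‖) 0 / t

/-- `t > 0` is admissible for `Ω` and `β`. -/
def admissible {n : ℕ} (Ω : Set (EuclideanSpace ℝ (Fin n))) (β t : ℝ) : Prop :=
  0 < t ∧ ∃ x₁ ∈ closure Ω, ∃ x₂ ∈ closure Ω, 2 * t ≤ ‖x₁ - x₂‖ ∧
    (∀ y ∈ frontier Ω, cone x₁ t y ≤ 1 / (β * t)) ∧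
    (∀ y ∈ frontier Ω, cone x₂ t y ≤ 1 / (β * t))

/-- `s_β(Ω)`, the supremum of admissible radii. -/
noncomputable def sGeom {n : ℕ} (Ω : Set (EuclideanSpace ℝ (Fin n))) (β : ℝ) : ℝ :=
  sSup {t | admissible Ω β t}

/-- The smallest Lipschitz constant of `w` on the set `s`. -/
noncomputable def lipConst {n : ℕ} (s : Set (EuclideanSpace ℝ (Fin n)))
    (w : EuclideanSpace ℝ (Fin n) → ℝ) : ℝ :=
  sInf {L | 0 ≤ L ∧ ∀ x ∈ s, ∀ y ∈ s, |w x - w y| ≤ L * ‖x - y‖}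

section Helpers

variable {n : ℕ} {x x₁ x₂ y z : EuclideanSpace ℝ (Fin n)} {t : ℝ}

lemma cone_nonneg (ht : 0 < t) : 0 ≤ cone x t y :=
  div_nonneg (le_max_right _ _) ht.le

lemma cone_le_one (ht : 0 < t) : cone x t y ≤ 1 := by
  rw [cone, div_le_one ht]
  have : 0 ≤ ‖y - x‖ := norm_nonneg _
  simp only [max_le_iff]
  constructor <;> linarith

lemma cone_self (ht : 0 < t) : cone x t x = 1 := by
  simp [cone, ht.ne', sub_self, ht.le, max_eq_left]

lemma cone_eq_zero (h : t ≤ ‖y - x‖) : cone x t y = 0 := by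
  simp [cone, max_eq_right (by linarith : t - ‖y - x‖ ≤ 0)]

lemma cone_lip (ht : 0 < t) : |cone x t y - cone x t z| ≤ (1 / t) * ‖y - z‖ := by
  rw [cone, cone, div_sub_div_same, abs_div, abs_of_pos ht, one_div, inv_mul_eq_div,
    div_le_div_iff_of_pos_right ht]
  calc |max (t - ‖y - x‖) 0 - max (t - ‖z - x‖) 0| ≤ |(t - ‖y - x‖) - (t - ‖z - x‖)| :=
        abs_max_sub_max_le_abs _ _ _
    _ = |‖z - x‖ - ‖y - x‖| := by ring_nf
    _ ≤ ‖z - x - (y - x)‖ := abs_norm_sub_norm_le _ _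
    _ = ‖z - y‖ := by rw [sub_sub_sub_cancel_right]
    _ = ‖y - z‖ := norm_sub_rev _ _

lemma cone_pos_max (h : 0 < cone x t y) (ht : 0 < t) :
    cone x t y = (t - ‖y - x‖) / t ∧ ‖y - x‖ < t := by
  rcases le_or_gt t ‖y - x‖ with h' | h'
  · rw [cone_eq_zero h'] at h; exact absurd h (lt_irrefl 0)
  · refine ⟨?_, h'⟩
    rw [cone, max_eq_left (by linarith)]

end Helpers
section Helpers2

variable {n : ℕ} {x x₁ x₂ y z : EuclideanSpace ℝ (Fin n)} {t : ℝ}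

lemma w_sub_le (ht : 0 < t) (hsep : 2 * t ≤ ‖x₁ - x₂‖) :
    cone x₁ t y - cone x₂ t y - (cone x₁ t z - cone x₂ t z) ≤ (1 / t) * ‖y - z‖ := by
  rcases eq_or_lt_of_le (cone_nonneg (x := x₂) (y := z) ht) with h2z | h2z
  · -- cone x₂ t z = 0
    have h1 : cone x₁ t y - cone x₁ t z ≤ (1 / t) * ‖y - z‖ :=
      (le_abs_self _).trans (cone_lip ht)
    have h2 : 0 ≤ cone x₂ t y := cone_nonneg ht
    linarith [h2z.symm]
  · -- cone x₂ t z > 0, so ‖z - x₂‖ < t and cone x₁ t z = 0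
    obtain ⟨h2z_eq, h2z_lt⟩ := cone_pos_max h2z ht
    have h1z : cone x₁ t z = 0 := by
      apply cone_eq_zero
      have := dist_triangle x₁ z x₂
      simp only [dist_eq_norm] at this
      have h' : ‖z - x₁‖ = ‖x₁ - z‖ := norm_sub_rev _ _
      linarith
    rcases eq_or_lt_of_le (cone_nonneg (x := x₁) (y := y) ht) with h1y | h1y
    · have h2 : |cone x₂ t z - cone x₂ t y| ≤ (1 / t) * ‖z - y‖ := cone_lip ht
      rw [norm_sub_rev z y] at h2
      have := (le_abs_self (cone x₂ t z - cone x₂ t y)).trans h2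
      linarith [h1y.symm]
    · obtain ⟨h1y_eq, h1y_lt⟩ := cone_pos_max h1y ht
      have h2y : cone x₂ t y = 0 := by
        apply cone_eq_zero
        have := dist_triangle x₂ y x₁
        simp only [dist_eq_norm] at this
        have h' : ‖x₂ - x₁‖ = ‖x₁ - x₂‖ := norm_sub_rev _ _
        have h'' : ‖x₂ - y‖ = ‖y - x₂‖ := norm_sub_rev _ _
        linarith
      rw [h1y_eq, h2z_eq, h1z, h2y]
      have hchain : ‖x₁ - x₂‖ ≤ ‖y - x₁‖ + ‖y - z‖ + ‖z - x₂‖ := by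
        have t1 := dist_triangle x₁ y z
        have t2 := dist_triangle x₁ z x₂
        simp only [dist_eq_norm] at t1 t2
        have h' : ‖y - x₁‖ = ‖x₁ - y‖ := norm_sub_rev _ _
        linarith
      have hre : (t - ‖y - x₁‖) / t - 0 - (0 - (t - ‖z - x₂‖) / t)
          = (2 * t - ‖y - x₁‖ - ‖z - x₂‖) / t := by ring
      rw [hre, one_div, inv_mul_eq_div, div_le_div_iff_of_pos_right ht]
      linarith

lemma w_lip (ht : 0 < t) (hsep : 2 * t ≤ ‖x₁ - x₂‖) :
    |cone x₁ t y - cone x₂ t y - (cone x₁ t z - cone x₂ t z)| ≤ (1 / t) * ‖y - z‖ := by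
  rw [abs_sub_le_iff]
  refine ⟨w_sub_le ht hsep, ?_⟩
  have := w_sub_le (y := z) (z := y) ht hsep
  rwa [norm_sub_rev] at this

end Helpers2
section Helpers3

variable {n : ℕ} {s : Set (EuclideanSpace ℝ (Fin n))} {w : EuclideanSpace ℝ (Fin n) → ℝ}

lemma lipConst_nonneg : 0 ≤ lipConst s w :=
  Real.sInf_nonneg fun _ h => h.1

lemma lipConst_le {L : ℝ} (h0 : 0 ≤ L)
    (h : ∀ x ∈ s, ∀ y ∈ s, |w x - w y| ≤ L * ‖x - y‖) : lipConst s w ≤ L :=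
  csInf_le ⟨0, fun _ h => h.1⟩ ⟨h0, h⟩

lemma lipConst_spec {K : NNReal} (hK : LipschitzOnWith K w s) :
    ∀ x ∈ s, ∀ y ∈ s, |w x - w y| ≤ lipConst s w * ‖x - y‖ := by
  intro x hx y hy
  rcases eq_or_lt_of_le (norm_nonneg (x - y)) with h0 | h0
  · have hxy : x = y := by
      rw [← sub_eq_zero]
      exact norm_eq_zero.mp h0.symm
    simp [hxy]
  · rw [← div_le_iff₀ h0]
    apply le_csInf
    · refine ⟨K, K.2, fun a ha b hb => ?_⟩
      have := hK.dist_le_mul a ha b hb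
      rwa [Real.dist_eq, dist_eq_norm] at this
    · rintro L ⟨hL0, hL⟩
      rw [div_le_iff₀ h0]
      exact hL x hx y hy

/-- If a continuous-on-closure function is `≤ M` on `Ω`, it is `≤ M` on the closure. -/
lemma myLeOnClosure {Ω : Set (EuclideanSpace ℝ (Fin n))} {M : ℝ}
    (hw : ContinuousOn w (closure Ω)) (h : ∀ x ∈ Ω, w x ≤ M) :
    ∀ x ∈ closure Ω, w x ≤ M := by
  intro x hx
  have hne : (nhdsWithin x Ω).NeBot := mem_closure_iff_nhdsWithin_neBot.mp hx
  have htend : Filter.Tendsto w (nhdsWithin x Ω) (nhds (w x)) :=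
    ((hw x hx).mono subset_closure).tendsto
  exact le_of_tendsto htend (Filter.eventually_iff_exists_mem.mpr
    ⟨Ω, self_mem_nhdsWithin, h⟩)

/-- Attainment of the supremum of the positive part on the closure. -/
lemma exists_max_eq {Ω : Set (EuclideanSpace ℝ (Fin n))} {M : ℝ}
    (hne : Ω.Nonempty) (hb : Bornology.IsBounded Ω)
    (hw : ContinuousOn w (closure Ω))
    (hbdd : BddAbove ((fun x => max (w x) 0) '' Ω))
    (hM : sSup ((fun x => max (w x) 0) '' Ω) = M) (hM0 : 0 < M) :
    (∀ y ∈ closure Ω, w y ≤ M) ∧ ∃ x ∈ closure Ω, w x = M := by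
  have hle : ∀ x ∈ Ω, w x ≤ M := by
    intro p hp
    calc w p ≤ max (w p) 0 := le_max_left _ _
      _ ≤ M := hM ▸ le_csSup hbdd ⟨p, hp, rfl⟩
  have hleC : ∀ y ∈ closure Ω, w y ≤ M := myLeOnClosure hw hle
  refine ⟨hleC, ?_⟩
  obtain ⟨x, hx, hmax⟩ := (hb.isCompact_closure).exists_isMaxOn
    (hne.mono subset_closure) hw
  refine ⟨x, hx, le_antisymm (hleC x hx) ?_⟩
  -- w x ≥ M
  refine le_of_forall_sub_le fun ε hε => ?_
  set δ := min ε M with hδ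
  have hδ0 : 0 < δ := lt_min hε hM0
  have hδM : δ ≤ M := min_le_right _ _
  obtain ⟨_, ⟨p, hp, rfl⟩, hgt⟩ := exists_lt_of_lt_csSup
    (hne.image _) (by rw [hM]; linarith : M - δ < sSup ((fun x => max (w x) 0) '' Ω))
  simp only [] at hgt
  have hwp : M - δ < w p := by
    rcases le_or_gt (w p) 0 with h' | h'
    · rw [max_eq_right h'] at hgt; linarith
    · rwa [max_eq_left h'.le] at hgt
  have := hmax (subset_closure hp)
  simp only [Set.mem_setOf_eq] at this
  have hδε : δ ≤ ε := min_le_left _ _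
  linarith

end Helpers3
/-- The variational quotient set. -/
def Qset {n : ℕ} (Ω : Set (EuclideanSpace ℝ (Fin n))) (β : ℝ) : Set ℝ :=
  { q : ℝ | ∃ w : EuclideanSpace ℝ (Fin n) → ℝ,
        (∃ L : NNReal, LipschitzOnWith L w (closure Ω)) ∧
        sSup ((fun x => max (w x) 0) '' Ω) = sSup ((fun x => max (-w x) 0) '' Ω) ∧
        0 < sSup ((fun x => max (w x) 0) '' Ω) ∧
        q = max (lipConst (closure Ω) w)
              (β * sSup ((fun y => |w y|) '' frontier Ω)) /
            sSup ((fun x => |w x|) '' Ω) }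

section Dir1

variable {n : ℕ} {Ω : Set (EuclideanSpace ℝ (Fin n))} {β t : ℝ}

lemma Qset_nonneg : ∀ q ∈ Qset Ω β, 0 ≤ q := by
  rintro q ⟨w, _, _, _, rfl⟩
  apply div_nonneg
  · exact le_trans lipConst_nonneg (le_max_left _ _)
  · exact Real.sSup_nonneg (by rintro _ ⟨p, _, rfl⟩; exact abs_nonneg _)

lemma Qset_bddBelow : BddBelow (Qset Ω β) := ⟨0, fun q hq => Qset_nonneg q hq⟩

lemma dir1 (hβ : 0 < β) (hne : Ω.Nonempty) (h : admissible Ω β t) :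
    ∃ q ∈ Qset Ω β, q ≤ 1 / t := by
  obtain ⟨ht, x₁, hx₁, x₂, hx₂, hsep, hc₁, hc₂⟩ := h
  set w : EuclideanSpace ℝ (Fin n) → ℝ := fun y => cone x₁ t y - cone x₂ t y with hw
  have hlipall : ∀ y z, |w y - w z| ≤ (1 / t) * ‖y - z‖ := fun y z => w_lip ht hsep
  have hKnn : (0 : ℝ) ≤ 1 / t := by positivity
  have hK : LipschitzOnWith ⟨1 / t, hKnn⟩ w (closure Ω) := by
    apply LipschitzOnWith.of_dist_le_mul
    intro a _ b _
    rw [Real.dist_eq, dist_eq_norm]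
    exact hlipall a b
  have hwle : ∀ y, w y ≤ 1 := fun y =>
    le_trans (by simp [hw]; linarith [cone_nonneg (x := x₂) (y := y) ht]) (cone_le_one (x := x₁) (y := y) ht)
  have hwge : ∀ y, -1 ≤ w y := fun y => by
    have h1 := cone_nonneg (x := x₁) (y := y) ht
    have h2 := cone_le_one (x := x₂) (y := y) ht
    simp only [hw]; linarith
  have habs : ∀ y, |w y| ≤ 1 := fun y => abs_le.mpr ⟨hwge y, hwle y⟩
  have hbddp : BddAbove ((fun x => max (w x) 0) '' Ω) :=
    ⟨1, by rintro _ ⟨p, _, rfl⟩; exact max_le (hwle p) zero_le_one⟩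
  have hbddn : BddAbove ((fun x => max (-w x) 0) '' Ω) :=
    ⟨1, by rintro _ ⟨p, _, rfl⟩; exact max_le (by linarith [hwge p]) zero_le_one⟩
  have hbdda : BddAbove ((fun x => |w x|) '' Ω) :=
    ⟨1, by rintro _ ⟨p, _, rfl⟩; exact habs p⟩
  -- points of Ω near a closure point where w is near 1 (resp -1)
  have hnear : ∀ (x : EuclideanSpace ℝ (Fin n)), x ∈ closure Ω → ∀ ε > (0:ℝ),
      ∃ p ∈ Ω, w x - ε ≤ w p := by
    intro x hx ε hε
    obtain ⟨p, hp, hd⟩ := Metric.mem_closure_iff.mp hx (ε * t) (by positivity)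
    have hb : (1 / t) * ‖x - p‖ ≤ ε := by
      rw [dist_eq_norm] at hd
      calc (1 / t) * ‖x - p‖ ≤ (1 / t) * (ε * t) :=
            mul_le_mul_of_nonneg_left hd.le hKnn
        _ = ε := by field_simp
    have h2 := (abs_le.mp ((hlipall x p).trans hb)).2
    exact ⟨p, hp, by linarith⟩
  have hwx₁ : w x₁ = 1 := by
    have h1 : cone x₂ t x₁ = 0 := cone_eq_zero (by linarith)
    simp [hw, h1, cone_self ht]
  have hwx₂ : w x₂ = -1 := by
    have h1 : cone x₁ t x₂ = 0 := cone_eq_zero (by rw [norm_sub_rev]; linarith)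
    simp [hw, h1, cone_self ht]
  have hA : sSup ((fun x => max (w x) 0) '' Ω) = 1 := by
    apply le_antisymm
    · exact Real.sSup_le (by rintro _ ⟨p, _, rfl⟩; exact max_le (hwle p) zero_le_one)
        zero_le_one
    · refine le_of_forall_sub_le fun ε hε => ?_
      obtain ⟨p, hp, hgt⟩ := hnear x₁ hx₁ ε hε
      rw [hwx₁] at hgt
      exact le_trans (le_trans hgt (le_max_left _ _)) (le_csSup hbddp ⟨p, hp, rfl⟩)
  have hB : sSup ((fun x => max (-w x) 0) '' Ω) = 1 := by
    apply le_antisymm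
    · exact Real.sSup_le (by rintro _ ⟨p, _, rfl⟩; exact max_le (by linarith [hwge p]) zero_le_one)
        zero_le_one
    · refine le_of_forall_sub_le fun ε hε => ?_
      have hx₂' : ∀ δ > (0:ℝ), ∃ p ∈ Ω, -w x₂ - δ ≤ -w p := by
        intro δ hδ
        obtain ⟨p, hp, hd⟩ := Metric.mem_closure_iff.mp hx₂ (δ * t) (by positivity)
        have hb : (1 / t) * ‖p - x₂‖ ≤ δ := by
          rw [dist_eq_norm] at hd
          rw [norm_sub_rev]
          calc (1 / t) * ‖x₂ - p‖ ≤ (1 / t) * (δ * t) :=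
                mul_le_mul_of_nonneg_left hd.le hKnn
            _ = δ := by field_simp
        have h2 := (abs_le.mp ((hlipall p x₂).trans hb)).2
        exact ⟨p, hp, by linarith⟩
      obtain ⟨p, hp, hgt⟩ := hx₂' ε hε
      rw [hwx₂] at hgt
      simp only [neg_neg] at hgt
      exact le_trans (le_trans hgt (le_max_left _ _)) (le_csSup hbddn ⟨p, hp, rfl⟩)
  have hC : sSup ((fun x => |w x|) '' Ω) = 1 := by
    apply le_antisymm
    · exact Real.sSup_le (by rintro _ ⟨p, _, rfl⟩; exact habs p) zero_le_one
    · refine le_of_forall_sub_le fun ε hε => ?_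
      obtain ⟨p, hp, hgt⟩ := hnear x₁ hx₁ ε hε
      rw [hwx₁] at hgt
      exact le_trans (le_trans hgt (le_abs_self _)) (le_csSup hbdda ⟨p, hp, rfl⟩)
  have hD : sSup ((fun y => |w y|) '' frontier Ω) ≤ 1 / (β * t) := by
    apply Real.sSup_le
    · rintro _ ⟨p, hp, rfl⟩
      have h1 := hc₁ p hp
      have h2 := hc₂ p hp
      have h1' := cone_nonneg (x := x₁) (y := p) ht
      have h2' := cone_nonneg (x := x₂) (y := p) ht
      rw [abs_le]
      constructor <;> simp only [hw] <;> [linarith; linarith]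
    · positivity
  have hlc : lipConst (closure Ω) w ≤ 1 / t :=
    lipConst_le hKnn fun a _ b _ => hlipall a b
  have hq : max (lipConst (closure Ω) w)
      (β * sSup ((fun y => |w y|) '' frontier Ω)) /
      sSup ((fun x => |w x|) '' Ω) ∈ Qset Ω β :=
    ⟨w, ⟨_, hK⟩, hA.trans hB.symm, by rw [hA]; exact zero_lt_one, rfl⟩
  refine ⟨_, hq, ?_⟩
  rw [hC, div_one]
  apply max_le hlc
  calc β * sSup ((fun y => |w y|) '' frontier Ω) ≤ β * (1 / (β * t)) :=
        mul_le_mul_of_nonneg_left hD hβ.le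
    _ = 1 / t := by field_simp

end Dir1

section Dir2

variable {n : ℕ} {Ω : Set (EuclideanSpace ℝ (Fin n))} {β : ℝ}

lemma dir2 (hβ : 0 < β) (hne : Ω.Nonempty) (hb : Bornology.IsBounded Ω) :
    ∀ q ∈ Qset Ω β, ∃ t, admissible Ω β t ∧ 1 / t = q := by
  rintro q ⟨w, ⟨K, hK⟩, heq, hpos, rfl⟩
  set M := sSup ((fun x => max (w x) 0) '' Ω) with hM
  have hwcont : ContinuousOn w (closure Ω) := hK.continuousOn
  obtain ⟨C, hC⟩ := (hb.isCompact_closure).exists_bound_of_continuousOn hwcont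
  have hC' : ∀ x ∈ closure Ω, |w x| ≤ C := by
    intro x hx; have := hC x hx; rwa [Real.norm_eq_abs] at this
  have hbddp : BddAbove ((fun x => max (w x) 0) '' Ω) := by
    refine ⟨max C 0, ?_⟩
    rintro _ ⟨p, hp, rfl⟩
    exact max_le_max (le_trans (le_abs_self _) (hC' p (subset_closure hp))) le_rfl
  have hbddn : BddAbove ((fun x => max (-w x) 0) '' Ω) := by
    refine ⟨max C 0, ?_⟩
    rintro _ ⟨p, hp, rfl⟩
    exact max_le_max (le_trans (neg_le_abs _) (hC' p (subset_closure hp))) le_rfl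
  have hbdda : BddAbove ((fun x => |w x|) '' Ω) := by
    refine ⟨C, ?_⟩
    rintro _ ⟨p, hp, rfl⟩
    exact hC' p (subset_closure hp)
  obtain ⟨hle₁, x₁, hx₁, hwx₁⟩ := exists_max_eq hne hb hwcont hbddp rfl hpos
  obtain ⟨hle₂, x₂, hx₂, hwx₂⟩ :=
    exists_max_eq (w := fun x => -w x) hne hb hwcont.neg hbddn (heq ▸ rfl) hpos
  set L := lipConst (closure Ω) w with hLdef
  have hLspec := lipConst_spec hK
  have hL2M : 2 * M ≤ L * ‖x₁ - x₂‖ := by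
    have := hLspec x₁ hx₁ x₂ hx₂
    have habs : |w x₁ - w x₂| = 2 * M := by
      rw [hwx₁, show w x₂ = -M by linarith [hwx₂]]
      rw [abs_of_pos (by linarith : (0:ℝ) < M - -M)]
      ring
    linarith [habs ▸ this]
  have hL0 : 0 < L := by
    rcases eq_or_lt_of_le (lipConst_nonneg (s := closure Ω) (w := w)) with h0 | h0
    · exfalso
      rw [hLdef, ← h0, zero_mul] at hL2M
      linarith
    · exact h0
  set b := sSup ((fun y => |w y|) '' frontier Ω) with hbdef
  have hb0 : 0 ≤ b := Real.sSup_nonneg (by rintro _ ⟨p, _, rfl⟩; exact abs_nonneg _)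
  have hbddf : BddAbove ((fun y => |w y|) '' frontier Ω) := by
    refine ⟨C, ?_⟩
    rintro _ ⟨p, hp, rfl⟩
    exact hC' p (frontier_subset_closure hp)
  have hbub : ∀ y ∈ frontier Ω, |w y| ≤ b := fun y hy => le_csSup hbddf ⟨y, hy, rfl⟩
  set D := max L (β * b) with hDdef
  have hD : 0 < D := lt_of_lt_of_le hL0 (le_max_left _ _)
  set t := M / D with htdef
  have ht : 0 < t := div_pos hpos hD
  -- the denominator equals M
  have hMden : sSup ((fun x => |w x|) '' Ω) = M := by
    apply le_antisymm
    · apply Real.sSup_le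
      · rintro _ ⟨p, hp, rfl⟩
        rw [abs_le]
        exact ⟨by linarith [hle₂ p (subset_closure hp)], hle₁ p (subset_closure hp)⟩
      · exact hpos.le
    · rw [hM]
      apply csSup_le (hne.image _)
      rintro _ ⟨p, hp, rfl⟩
      exact le_trans (max_le (le_abs_self _) (abs_nonneg _)) (le_csSup hbdda ⟨p, hp, rfl⟩)
  -- cone condition
  have hcone : ∀ x : EuclideanSpace ℝ (Fin n), x ∈ closure Ω → (w x = M ∨ w x = -M) →
      ∀ y ∈ frontier Ω, cone x t y ≤ 1 / (β * t) := by
    intro x hx hwx y hy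
    set d := ‖y - x‖ with hddef
    have hd0 : 0 ≤ d := norm_nonneg _
    have hMb : M - b ≤ L * d := by
      have hsp := hLspec x hx y (frontier_subset_closure hy)
      rw [norm_sub_rev] at hsp
      have hyb := abs_le.mp (hbub y hy)
      rcases hwx with h | h
      · have := (abs_le.mp hsp).2
        rw [h] at this
        linarith [hyb.2]
      · have := (abs_le.mp hsp).1
        rw [h] at this
        linarith [hyb.1]
    -- key: t ≤ 1/β + d
    have hkey : t ≤ 1 / β + d := by
      have h1 : β * (D * d) ≥ β * (L * d) :=
        mul_le_mul_of_nonneg_left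
          (mul_le_mul_of_nonneg_right (le_max_left _ _) hd0) hβ.le
      have h2 : β * (L * d) ≥ β * (M - b) := mul_le_mul_of_nonneg_left hMb hβ.le
      have h3 : β * b ≤ D := le_max_right _ _
      have hkey' : M * β ≤ (1 / β + d) * (β * D) := by
        have : (1 / β + d) * (β * D) = D + β * (D * d) := by
          field_simp
        rw [this]
        nlinarith
      rw [htdef, div_le_iff₀ hD]
      rw [ge_iff_le] at h1 h2
      calc M = M * β / β := by field_simp
        _ ≤ (1 / β + d) * (β * D) / β := by
            apply div_le_div_of_nonneg_right hkey' hβ.le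
        _ = (1 / β + d) * D := by field_simp
    have hmax : max (t - d) 0 ≤ 1 / β := by
      apply max_le (by linarith) (by positivity)
    rw [cone, ← hddef]
    calc max (t - d) 0 / t ≤ (1 / β) / t := by
          apply div_le_div_of_nonneg_right hmax ht.le
      _ = 1 / (β * t) := by field_simp
  refine ⟨t, ⟨ht, x₁, hx₁, x₂, hx₂, ?_, hcone x₁ hx₁ (Or.inl hwx₁) ,
    hcone x₂ hx₂ (Or.inr (by linarith [hwx₂]))⟩, ?_⟩
  · rw [htdef]
    rw [show 2 * (M / D) = 2 * M / D by ring, div_le_iff₀ hD]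
    calc 2 * M ≤ L * ‖x₁ - x₂‖ := hL2M
      _ ≤ D * ‖x₁ - x₂‖ :=
          mul_le_mul_of_nonneg_right (le_max_left _ _) (norm_nonneg _)
      _ = ‖x₁ - x₂‖ * D := mul_comm _ _
  · rw [htdef, one_div_div, hMden]

end Dir2

section Main

variable {n : ℕ} {Ω : Set (EuclideanSpace ℝ (Fin n))} {β : ℝ}

lemma exists_admissible_small (hn : 1 ≤ n) (hne : Ω.Nonempty) (ho : IsOpen Ω)
    (hβ : 0 < β) : ∃ t, admissible Ω β t := by
  obtain ⟨z, hz⟩ := hne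
  obtain ⟨r, hr, hball⟩ := Metric.isOpen_iff.mp ho z hz
  set v : EuclideanSpace ℝ (Fin n) := EuclideanSpace.single (⟨0, hn⟩ : Fin n) (r / 2)
    with hv
  have hnv : ‖v‖ = r / 2 := by
    rw [hv, EuclideanSpace.norm_single, Real.norm_eq_abs, abs_of_pos (by linarith)]
  set t := min (r / 2) (1 / β) with htdef
  have ht : 0 < t := lt_min (by linarith) (by positivity)
  have hx₁ : z + v ∈ closure Ω := by
    apply subset_closure
    apply hball
    rw [mem_ball, dist_eq_norm, add_sub_cancel_left, hnv]
    linarith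
  have hx₂ : z - v ∈ closure Ω := by
    apply subset_closure
    apply hball
    rw [mem_ball, dist_eq_norm, sub_sub_cancel_left, norm_neg, hnv]
    linarith
  have hsep : 2 * t ≤ ‖(z + v) - (z - v)‖ := by
    rw [show (z + v) - (z - v) = (2 : ℝ) • v by module, norm_smul, Real.norm_ofNat, hnv]
    have : t ≤ r / 2 := min_le_left _ _
    linarith
  have hcone : ∀ x : EuclideanSpace ℝ (Fin n), ∀ y, cone x t y ≤ 1 / (β * t) := by
    intro x y
    refine (cone_le_one ht).trans ?_
    rw [le_div_iff₀ (by positivity), one_mul]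
    calc β * t ≤ β * (1 / β) :=
          mul_le_mul_of_nonneg_left (min_le_right _ _) hβ.le
      _ = 1 := by field_simp
  exact ⟨t, ht, z + v, hx₁, z - v, hx₂, hsep,
    fun y _ => hcone _ y, fun y _ => hcone _ y⟩

lemma admissible_bddAbove (hb : Bornology.IsBounded Ω) :
    BddAbove {t | admissible Ω β t} := by
  obtain ⟨C, hC⟩ := Metric.isBounded_iff.mp hb.closure
  refine ⟨C / 2, ?_⟩
  rintro t ⟨ht, x₁, hx₁, x₂, hx₂, hsep, -, -⟩
  have := hC hx₁ hx₂
  rw [dist_eq_norm] at this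
  linarith

end Main

theorem second_infinity_eigenvalue_variational_characterization
    {n : ℕ} (hn : 1 ≤ n) (Ω : Set (EuclideanSpace ℝ (Fin n)))
    (hne : Ω.Nonempty) (ho : IsOpen Ω) (hb : Bornology.IsBounded Ω)
    (β : ℝ) (hβ : 0 < β) :
    1 / sGeom Ω β =
      sInf { q : ℝ | ∃ w : EuclideanSpace ℝ (Fin n) → ℝ,
        (∃ L : NNReal, LipschitzOnWith L w (closure Ω)) ∧
        sSup ((fun x => max (w x) 0) '' Ω) = sSup ((fun x => max (-w x) 0) '' Ω) ∧
        0 < sSup ((fun x => max (w x) 0) '' Ω) ∧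
        q = max (lipConst (closure Ω) w)
              (β * sSup ((fun y => |w y|) '' frontier Ω)) /
            sSup ((fun x => |w x|) '' Ω) } := by
  show 1 / sGeom Ω β = sInf (Qset Ω β)
  obtain ⟨t₀, ht₀⟩ := exists_admissible_small hn hne ho hβ
  have hSbdd : BddAbove {t | admissible Ω β t} := admissible_bddAbove hb
  have hSne : Set.Nonempty {t | admissible Ω β t} := ⟨t₀, ht₀⟩
  have hs_pos : 0 < sGeom Ω β :=
    lt_of_lt_of_le ht₀.1 (le_csSup hSbdd ht₀)
  have hQne : (Qset Ω β).Nonempty := by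
    obtain ⟨q, hq, -⟩ := dir1 hβ hne ht₀
    exact ⟨q, hq⟩
  apply le_antisymm
  · apply le_csInf hQne
    intro q hq
    obtain ⟨t, hadm, hteq⟩ := dir2 hβ hne hb q hq
    rw [← hteq]
    exact one_div_le_one_div_of_le hadm.1 (le_csSup hSbdd hadm)
  · apply le_of_forall_gt_imp_ge_of_dense
    intro c hc
    have hc0 : 0 < 1 / sGeom Ω β := by positivity
    have hcs : 1 / c < sGeom Ω β := by
      have := one_div_lt_one_div_of_lt hc0 hc
      rwa [one_div_one_div] at this
    obtain ⟨t, htS, htgt⟩ := exists_lt_of_lt_csSup hSne hcs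
    obtain ⟨q, hqQ, hqle⟩ := dir1 hβ hne htS
    have h1t : 1 / t ≤ c := by
      have hc' : 0 < c := lt_trans hc0 hc
      have := one_div_le_one_div_of_le (by positivity : (0:ℝ) < 1 / c) htgt.le
      rwa [one_div_one_div] at this
    exact le_trans (csInf_le Qset_bddBelow hqQ) (le_trans hqle h1t)
end

section
/- Let n ≥ 1, let Ω ⊂ ℝⁿ be a nonempty bounded open set and let β > 0. Let w be a Lipschitz function on the closure of Ω with sup_Ω w⁺ = sup_Ω w⁻ = M > 0, where w⁺ = max(w,0) and w⁻ = max(−w,0). Then max{Lip(w), β·sup_{∂Ω}|w|} ≥ M / s_β(Ω); that is, every function whose positive and negative parts have the same supremum on Ω has normalized Rayleigh quotient at least λ_{2,∞}(Ω) = 1/s_β(Ω). -/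
open Set Metric

/-!
Let `R = max(Lip w, β sup_{∂Ω} |w|)`. By compactness of `closure Ω`, `w` takes the values `M`
and `-M` at points `x₁, x₂` of `closure Ω`. Then `2M = |w x₁ - w x₂| ≤ R |x₁ - x₂|`, and for
`y ∈ ∂Ω` the Lipschitz bound `M - |w y| ≤ R |y - xᵢ|` together with `β |w y| ≤ R` shows that the
cone of radius `M / R` at `xᵢ` is at most `1 / (β M / R)` on `∂Ω`. So `M / R` is admissible,
whence `M / R ≤ s_β(Ω)`.
-/

theorem IsCompact.exists_mem_closure_eq_sSup_image {α β : Type*} [TopologicalSpace α]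
    [ConditionallyCompleteLinearOrder β] [TopologicalSpace β] [OrderTopology β]
    {s : Set α} {f : α → β} (hs : IsCompact (closure s)) (hne : s.Nonempty)
    (hf : ContinuousOn f (closure s)) :
    ∃ x ∈ closure s, f x = sSup (f '' s) := by
  obtain ⟨x, hx, hmax⟩ := hs.exists_isMaxOn hne.closure hf
  have hub : f x ∈ upperBounds (f '' s) := by
    rintro _ ⟨y, hy, rfl⟩
    exact hmax (subset_closure hy)
  exact ⟨x, hx, ((isLUB_of_mem_closure hub (hf.image_closure ⟨x, hx, rfl⟩)).csSup_eq
    (hne.image f)).symm⟩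

theorem IsCompact.exists_mem_closure_eq_of_sSup_max_zero {α : Type*} [TopologicalSpace α]
    {s : Set α} {v : α → ℝ} {M : ℝ} (hs : IsCompact (closure s)) (hne : s.Nonempty)
    (hv : ContinuousOn v (closure s)) (hM : 0 < M)
    (hsup : sSup ((fun x => max (v x) 0) '' s) = M) :
    ∃ x ∈ closure s, v x = M := by
  obtain ⟨x, hx, hxM⟩ := hs.exists_mem_closure_eq_sSup_image (f := fun x => max (v x) 0) hne
    (hv.sup continuousOn_const)
  refine ⟨x, hx, ?_⟩
  rw [hsup] at hxM
  rcases max_choice (v x) 0 with h | h <;> rw [h] at hxM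
  · exact hxM
  · exact absurd hxM.symm hM.ne'

section

variable {n : ℕ}

theorem LipschitzOnWith.abs_sub_le_lipConst_mul {s : Set (EuclideanSpace ℝ (Fin n))}
    {w : EuclideanSpace ℝ (Fin n) → ℝ} {K : NNReal} (hw : LipschitzOnWith K w s) :
    ∀ x ∈ s, ∀ y ∈ s, |w x - w y| ≤ lipConst s w * ‖x - y‖ := by
  have hne : {L : ℝ | 0 ≤ L ∧ ∀ x ∈ s, ∀ y ∈ s, |w x - w y| ≤ L * ‖x - y‖}.Nonempty :=
    ⟨K, K.2, fun x hx y hy => by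
      simpa only [dist_eq_norm, Real.norm_eq_abs] using hw.dist_le_mul x hx y hy⟩
  have hclosed : IsClosed {L : ℝ | 0 ≤ L ∧ ∀ x ∈ s, ∀ y ∈ s, |w x - w y| ≤ L * ‖x - y‖} := by
    simp only [ofPred_and, ofPred_forall]
    exact isClosed_Ici.inter <| isClosed_iInter fun _ => isClosed_iInter fun _ =>
      isClosed_iInter fun _ => isClosed_iInter fun _ =>
        isClosed_le continuous_const (continuous_id.mul continuous_const)
  exact (hclosed.csInf_mem hne ⟨0, fun _ h => h.1⟩).2

theorem bddAbove_setOf_admissible {Ω : Set (EuclideanSpace ℝ (Fin n))}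
    (hb : Bornology.IsBounded Ω) (β : ℝ) : BddAbove {t | admissible Ω β t} := by
  refine ⟨diam (closure Ω) / 2, fun t ⟨_, x₁, hx₁, x₂, hx₂, hsep, _⟩ => ?_⟩
  have := dist_le_diam_of_mem hb.closure hx₁ hx₂
  rw [dist_eq_norm] at this
  linarith

theorem cone_le_of_sub_norm_le {x y : EuclideanSpace ℝ (Fin n)} {t β : ℝ} (ht : 0 < t)
    (hβ : 0 < β) (h : t - ‖y - x‖ ≤ 1 / β) : cone x t y ≤ 1 / (β * t) := by
  rw [cone, ← div_div]
  exact div_le_div_of_nonneg_right (max_le h (by positivity)) ht.le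

variable {Ω : Set (EuclideanSpace ℝ (Fin n))} {w : EuclideanSpace ℝ (Fin n) → ℝ} {β M R : ℝ}

theorem cone_div_le_of_abs_eq (hβ : 0 < β) (hM : 0 < M) (hR : 0 < R)
    (hlip : ∀ x ∈ closure Ω, ∀ y ∈ closure Ω, |w x - w y| ≤ R * ‖x - y‖)
    (hbdry : ∀ y ∈ frontier Ω, β * |w y| ≤ R)
    {x : EuclideanSpace ℝ (Fin n)} (hx : x ∈ closure Ω) (hwx : |w x| = M) :
    ∀ y ∈ frontier Ω, cone x (M / R) y ≤ 1 / (β * (M / R)) := by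
  intro y hy
  refine cone_le_of_sub_norm_le (div_pos hM hR) hβ ?_
  have hdrop : M - |w y| ≤ R * ‖y - x‖ := by
    rw [← hwx, norm_sub_rev]
    exact (abs_sub_abs_le_abs_sub _ _).trans (hlip x hx y (frontier_subset_closure hy))
  have hwy : |w y| ≤ R / β := by
    rw [le_div_iff₀ hβ, mul_comm]
    exact hbdry y hy
  calc M / R - ‖y - x‖ = (M - R * ‖y - x‖) / R := by field_simp
    _ ≤ (R / β) / R := by gcongr; linarith
    _ = 1 / β := by field_simp

theorem admissible_div_of_lipschitz {x₁ x₂ : EuclideanSpace ℝ (Fin n)} (hβ : 0 < β) (hM : 0 < M)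
    (hx₁ : x₁ ∈ closure Ω) (hx₂ : x₂ ∈ closure Ω) (h₁ : w x₁ = M) (h₂ : w x₂ = -M)
    (hlip : ∀ x ∈ closure Ω, ∀ y ∈ closure Ω, |w x - w y| ≤ R * ‖x - y‖)
    (hbdry : ∀ y ∈ frontier Ω, β * |w y| ≤ R) :
    admissible Ω β (M / R) := by
  have hsep : 2 * M ≤ R * ‖x₁ - x₂‖ := by
    have h := hlip x₁ hx₁ x₂ hx₂
    rwa [h₁, h₂, sub_neg_eq_add, ← two_mul, abs_of_pos (by positivity)] at h
  have hR : 0 < R := by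
    by_contra! hR
    nlinarith [norm_nonneg (x₁ - x₂)]
  refine ⟨div_pos hM hR, x₁, hx₁, x₂, hx₂, ?_, ?_, ?_⟩
  · rw [← mul_div_assoc, div_le_iff₀ hR, mul_comm ‖x₁ - x₂‖]
    exact hsep
  · exact cone_div_le_of_abs_eq hβ hM hR hlip hbdry hx₁ (by rw [h₁, abs_of_pos hM])
  · exact cone_div_le_of_abs_eq hβ hM hR hlip hbdry hx₂ (by rw [h₂, abs_neg, abs_of_pos hM])

end

theorem rayleigh_lower_bound_for_balanced_functions_general
    {n : ℕ} (Ω : Set (EuclideanSpace ℝ (Fin n)))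
    (hne : Ω.Nonempty) (hb : Bornology.IsBounded Ω)
    (β : ℝ) (hβ : 0 < β)
    (w : EuclideanSpace ℝ (Fin n) → ℝ)
    (hw : ∃ L : NNReal, LipschitzOnWith L w (closure Ω))
    (M : ℝ) (hM : 0 < M)
    (hplus : sSup ((fun x => max (w x) 0) '' Ω) = M)
    (hminus : sSup ((fun x => max (-w x) 0) '' Ω) = M) :
    M / sGeom Ω β ≤
      max (lipConst (closure Ω) w) (β * sSup ((fun y => |w y|) '' frontier Ω)) := by
  obtain ⟨K, hK⟩ := hw
  have hcpt := hb.isCompact_closure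
  obtain ⟨x₁, hx₁, h₁⟩ := hcpt.exists_mem_closure_eq_of_sSup_max_zero hne hK.continuousOn hM hplus
  obtain ⟨x₂, hx₂, h₂⟩ :=
    hcpt.exists_mem_closure_eq_of_sSup_max_zero hne hK.continuousOn.neg hM hminus
  set R := max (lipConst (closure Ω) w) (β * sSup ((fun y => |w y|) '' frontier Ω))
  have hlip : ∀ x ∈ closure Ω, ∀ y ∈ closure Ω, |w x - w y| ≤ R * ‖x - y‖ := fun x hx y hy =>
    (hK.abs_sub_le_lipConst_mul x hx y hy).trans (by gcongr; exact le_max_left _ _)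
  have hbdd : BddAbove ((fun y => |w y|) '' frontier Ω) :=
    (hcpt.bddAbove_image hK.continuousOn.abs).mono (image_mono frontier_subset_closure)
  have hbdry : ∀ y ∈ frontier Ω, β * |w y| ≤ R := fun y hy =>
    (mul_le_mul_of_nonneg_left (le_csSup hbdd ⟨y, hy, rfl⟩) hβ.le).trans (le_max_right _ _)
  have hadm := admissible_div_of_lipschitz hβ hM hx₁ hx₂ h₁ (neg_eq_iff_eq_neg.mp h₂) hlip hbdry
  calc M / sGeom Ω β ≤ M / (M / R) :=
        div_le_div_of_nonneg_left hM.le hadm.1 (le_csSup (bddAbove_setOf_admissible hb β) hadm)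
    _ = R := div_div_cancel₀ hM.ne'

theorem rayleigh_lower_bound_for_balanced_functions
    {n : ℕ} (hn : 1 ≤ n) (Ω : Set (EuclideanSpace ℝ (Fin n)))
    (hne : Ω.Nonempty) (ho : IsOpen Ω) (hb : Bornology.IsBounded Ω)
    (β : ℝ) (hβ : 0 < β)
    (w : EuclideanSpace ℝ (Fin n) → ℝ)
    (hw : ∃ L : NNReal, LipschitzOnWith L w (closure Ω))
    (M : ℝ) (hM : 0 < M)
    (hplus : sSup ((fun x => max (w x) 0) '' Ω) = M)
    (hminus : sSup ((fun x => max (-w x) 0) '' Ω) = M) :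
    M / sGeom Ω β ≤
      max (lipConst (closure Ω) w) (β * sSup ((fun y => |w y|) '' frontier Ω)) :=
  rayleigh_lower_bound_for_balanced_functions_general Ω hne hb β hβ w hw M hM hplus hminus
end

section
/- Let n ≥ 1, let Ω ⊂ ℝⁿ be a nonempty bounded open set and let β > 0. Then r₂(Ω) ≤ s_β(Ω) ≤ diam(Ω)/2, where r₂(Ω) = sup{t > 0 : there exist x₁, x₂ with the open balls B(x₁,t) and B(x₂,t) contained in Ω and disjoint} and diam(Ω) is the Euclidean diameter of Ω. Equivalently, 2/diam(Ω) ≤ λ_{2,∞}(Ω) ≤ 1/r₂(Ω), the lower and upper bounds being the second Neumann and Dirichlet ∞-eigenvalues respectively. -/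
open Set Metric

/-- `r₂(Ω)`: the largest radius of two disjoint balls contained in `Ω`. -/
noncomputable def r2 {n : ℕ} (Ω : Set (EuclideanSpace ℝ (Fin n))) : ℝ :=
  sSup {t | 0 < t ∧ ∃ x₁ x₂ : EuclideanSpace ℝ (Fin n),
    Metric.ball x₁ t ⊆ Ω ∧ Metric.ball x₂ t ⊆ Ω ∧
    Disjoint (Metric.ball x₁ t) (Metric.ball x₂ t)}

theorem r2_le_sGeom_le_half_diam
    {n : ℕ} (hn : 1 ≤ n) (Ω : Set (EuclideanSpace ℝ (Fin n)))
    (hne : Ω.Nonempty) (ho : IsOpen Ω) (hb : Bornology.IsBounded Ω)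
    (β : ℝ) (hβ : 0 < β) :
    r2 Ω ≤ sGeom Ω β ∧ sGeom Ω β ≤ Metric.diam Ω / 2 := by
  have hd0 : (0:ℝ) ≤ Metric.diam Ω / 2 := by positivity
  have hadm : ∀ t, admissible Ω β t → t ≤ Metric.diam Ω / 2 := by
    rintro t ⟨ht, x₁, hx₁, x₂, hx₂, h2t, -, -⟩
    have hnd : ‖x₁ - x₂‖ = dist x₁ x₂ := (dist_eq_norm x₁ x₂).symm
    have hle : dist x₁ x₂ ≤ Metric.diam Ω := by
      rw [← Metric.diam_closure]
      exact Metric.dist_le_diam_of_mem hb.closure hx₁ hx₂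
    linarith
  have hbdd : BddAbove {t | admissible Ω β t} := ⟨_, fun t ht => hadm t ht⟩
  constructor
  · apply Real.sSup_le
    · rintro t ⟨ht, x₁, x₂, hb₁, hb₂, hdisj⟩
      have hcone : ∀ x : EuclideanSpace ℝ (Fin n), Metric.ball x t ⊆ Ω →
          ∀ y ∈ frontier Ω, cone x t y ≤ 1 / (β * t) := by
        intro x hbx y hy
        have hyΩ : y ∉ Ω := by
          rw [ho.frontier_eq] at hy
          exact hy.2
        have hge : t ≤ ‖y - x‖ := by
          by_contra h
          push_neg at h
          exact hyΩ (hbx (by rwa [mem_ball, dist_eq_norm]))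
        have : cone x t y = 0 := by
          unfold cone
          rw [max_eq_right (by linarith), zero_div]
        rw [this]
        positivity
      have hadmt : admissible Ω β t := by
        refine ⟨ht, x₁, subset_closure (hb₁ (mem_ball_self ht)), x₂,
          subset_closure (hb₂ (mem_ball_self ht)), ?_, hcone x₁ hb₁, hcone x₂ hb₂⟩
        rw [← dist_eq_norm]
        by_contra h
        push_neg at h
        have hm1 : midpoint ℝ x₁ x₂ ∈ Metric.ball x₁ t := by
          rw [mem_ball, dist_midpoint_left]
          simp only [Real.norm_ofNat]
          rw [inv_mul_eq_div]
          linarith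
        have hm2 : midpoint ℝ x₁ x₂ ∈ Metric.ball x₂ t := by
          rw [mem_ball, dist_midpoint_right]
          simp only [Real.norm_ofNat]
          rw [inv_mul_eq_div]
          linarith
        exact Set.disjoint_left.1 hdisj hm1 hm2
      exact le_csSup hbdd hadmt
    · exact Real.sSup_nonneg fun t ht => le_of_lt ht.1
  · exact Real.sSup_le hadm hd0
end

section
/- Let n ≥ 1, let Ω ⊂ ℝⁿ be a nonempty bounded open set and let β > 0. If β ≤ 2/diam(Ω), where diam(Ω) is the Euclidean diameter of Ω, then s_β(Ω) = diam(Ω)/2; equivalently, λ_{2,∞}(Ω) = 2/diam(Ω), the second Neumann ∞-eigenvalue. -/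
open Set Metric

theorem sGeom_eq_half_diam_of_beta_small
    {n : ℕ} (hn : 1 ≤ n) (Ω : Set (EuclideanSpace ℝ (Fin n)))
    (hne : Ω.Nonempty) (ho : IsOpen Ω) (hb : Bornology.IsBounded Ω)
    (β : ℝ) (hβ : 0 < β) (hβle : β ≤ 2 / Metric.diam Ω) :
    sGeom Ω β = Metric.diam Ω / 2 := by
  set D := Metric.diam Ω with hDdef
  -- D > 0
  have hD : 0 < D := by
    obtain ⟨x, hx⟩ := hne
    obtain ⟨r, hr, hball⟩ := Metric.isOpen_iff.mp ho x hx
    have hi : 0 < n := hn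
    set y : EuclideanSpace ℝ (Fin n) := x + (r / 2) • EuclideanSpace.single ⟨0, hi⟩ 1 with hy
    have hnorm : ‖(r / 2) • EuclideanSpace.single (⟨0, hi⟩ : Fin n) (1 : ℝ)‖ = r / 2 := by
      rw [norm_smul, EuclideanSpace.norm_single]
      simp [abs_of_pos, hr, le_of_lt hr]
    have hdist : dist y x = r / 2 := by
      rw [dist_eq_norm, hy]
      simpa using hnorm
    have hyΩ : y ∈ Ω := hball (by
      simp only [Metric.mem_ball, hdist]; linarith)
    have : dist y x ≤ D := Metric.dist_le_diam_of_mem hb hyΩ hx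
    linarith
  -- upper bound : any admissible t satisfies t ≤ D / 2
  have hub : ∀ t ∈ {t | admissible Ω β t}, t ≤ D / 2 := by
    rintro t ⟨ht, x₁, hx₁, x₂, hx₂, hsep, -⟩
    have h1 : dist x₁ x₂ ≤ Metric.diam (closure Ω) :=
      Metric.dist_le_diam_of_mem hb.closure hx₁ hx₂
    rw [Metric.diam_closure] at h1
    rw [← dist_eq_norm] at hsep
    linarith
  -- D/2 is admissible
  have hmem : D / 2 ∈ {t | admissible Ω β t} := by
    -- diameter is attained on the compact closure
    have hK : IsCompact (closure Ω) := hb.isCompact_closure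
    have hKne : (closure Ω).Nonempty := hne.closure
    have hKK : IsCompact ((closure Ω) ×ˢ (closure Ω)) := hK.prod hK
    have hcont : Continuous (fun p : EuclideanSpace ℝ (Fin n) × EuclideanSpace ℝ (Fin n) =>
        dist p.1 p.2) := continuous_dist
    obtain ⟨⟨a, b⟩, hab, hmax⟩ := hKK.exists_isMaxOn (hKne.prod hKne) hcont.continuousOn
    have haK : a ∈ closure Ω := hab.1
    have hbK : b ∈ closure Ω := hab.2
    have hDle : D ≤ dist a b := by
      rw [hDdef, ← Metric.diam_closure]
      refine Metric.diam_le_of_forall_dist_le dist_nonneg ?_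
      intro p hp q hq
      simpa using hmax (Set.mk_mem_prod hp hq)
    have ht : 0 < D / 2 := by linarith
    refine ⟨ht, a, haK, b, hbK, ?_, ?_, ?_⟩
    · rw [← dist_eq_norm]; linarith
    all_goals {
      intro y hy
      have hβD : β * D ≤ 2 := by
        rw [le_div_iff₀ hD] at hβle; linarith
      have hβt : β * (D / 2) ≤ 1 := by linarith
      have h1 : ∀ x, cone x (D / 2) y ≤ 1 := by
        intro x
        rw [cone, div_le_one ht]
        exact max_le (by linarith [norm_nonneg (y - x)]) (le_of_lt ht)
      have h2 : (1 : ℝ) ≤ 1 / (β * (D / 2)) :=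
        one_le_one_div (by positivity) hβt
      linarith [h1 a, h1 b] }
  have hbdd : BddAbove {t | admissible Ω β t} := ⟨D / 2, hub⟩
  have h1 : sGeom Ω β ≤ D / 2 := csSup_le ⟨D / 2, hmem⟩ hub
  have h2 : D / 2 ≤ sGeom Ω β := le_csSup hbdd hmem
  linarith
end

section
/- Let n ≥ 1, let Ω ⊂ ℝⁿ be a nonempty bounded open set and let β > 0. If β > 2/diam(Ω), where diam(Ω) is the Euclidean diameter of Ω, then s_β(Ω) > 1/β (strict inequality). In particular there exists t̄ > 0 such that (1 + βt̄)/β is admissible in the definition of s_β(Ω). -/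
open Set Metric

theorem sGeom_gt_inv_beta_of_beta_strictly_large
    {n : ℕ} (hn : 1 ≤ n) (Ω : Set (EuclideanSpace ℝ (Fin n)))
    (hne : Ω.Nonempty) (ho : IsOpen Ω) (hb : Bornology.IsBounded Ω)
    (β : ℝ) (hβ : 0 < β) (hβgt : 2 / Metric.diam Ω < β) :
    1 / β < sGeom Ω β ∧ ∃ tbar > (0:ℝ), admissible Ω β ((1 + β * tbar) / β) := by
  haveI : Nonempty (Fin n) := ⟨⟨0, hn⟩⟩
  -- diam Ω > 0
  obtain ⟨x₀, hx₀⟩ := hne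
  obtain ⟨r₀, hr₀, hball₀⟩ := Metric.isOpen_iff.mp ho x₀ hx₀
  obtain ⟨v, hv⟩ := exists_norm_eq (EuclideanSpace ℝ (Fin n)) (le_of_lt (half_pos hr₀))
  have hz : x₀ + v ∈ Ω := by
    apply hball₀
    rw [Metric.mem_ball, dist_eq_norm]
    simp only [add_sub_cancel_left, hv]
    linarith
  have hdpos : 0 < Metric.diam Ω := by
    have h1 : dist (x₀ + v) x₀ ≤ Metric.diam Ω :=
      Metric.dist_le_diam_of_mem hb hz hx₀
    have h2 : dist (x₀ + v) x₀ = r₀ / 2 := by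
      rw [dist_eq_norm]; simpa using hv
    linarith
  -- 2 / β < diam Ω
  have h2β : 2 / β < Metric.diam Ω := by
    rw [div_lt_iff₀ hβ]
    rw [div_lt_iff₀ hdpos] at hβgt
    linarith [hβgt]
  -- get two points far apart
  obtain ⟨x₁, hx₁, x₂, hx₂, h12⟩ :
      ∃ x₁ ∈ Ω, ∃ x₂ ∈ Ω, 2 / β < dist x₁ x₂ := by
    by_contra h
    push_neg at h
    have : Metric.diam Ω ≤ 2 / β :=
      Metric.diam_le_of_forall_dist_le (by positivity) h
    linarith
  obtain ⟨r₁, hr₁, hball₁⟩ := Metric.isOpen_iff.mp ho x₁ hx₁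
  obtain ⟨r₂, hr₂, hball₂⟩ := Metric.isOpen_iff.mp ho x₂ hx₂
  set ε : ℝ := min (min r₁ r₂) ((dist x₁ x₂ - 2 / β) / 2) with hε
  have hεpos : 0 < ε := by
    apply lt_min (lt_min hr₁ hr₂)
    linarith
  have hεr₁ : ε ≤ r₁ := le_trans (min_le_left _ _) (min_le_left _ _)
  have hεr₂ : ε ≤ r₂ := le_trans (min_le_left _ _) (min_le_right _ _)
  have hεd : ε ≤ (dist x₁ x₂ - 2 / β) / 2 := min_le_right _ _
  set t : ℝ := 1 / β + ε with ht
  have htpos : 0 < t := by positivity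
  -- frontier distance bounds
  have hfront : ∀ y ∈ frontier Ω, ∀ x : EuclideanSpace ℝ (Fin n), ∀ r : ℝ,
      Metric.ball x r ⊆ Ω → r ≤ ‖y - x‖ := by
    intro y hy x r hball
    by_contra h
    push_neg at h
    have : y ∈ Ω := hball (by rwa [Metric.mem_ball, dist_eq_norm])
    exact hy.2 (by rwa [ho.interior_eq])
  -- cone bound
  have hcone : ∀ (x : EuclideanSpace ℝ (Fin n)) (r : ℝ), ε ≤ r →
      Metric.ball x r ⊆ Ω → ∀ y ∈ frontier Ω, cone x t y ≤ 1 / (β * t) := by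
    intro x r hr hball y hy
    have hyx : r ≤ ‖y - x‖ := hfront y hy x r hball
    have hmax : max (t - ‖y - x‖) 0 ≤ 1 / β := by
      apply max_le _ (by positivity)
      have : ε ≤ ‖y - x‖ := le_trans hr hyx
      simp only [ht]; linarith
    unfold cone
    rw [div_le_div_iff₀ htpos (by positivity)]
    calc max (t - ‖y - x‖) 0 * (β * t) ≤ (1 / β) * (β * t) := by
          apply mul_le_mul_of_nonneg_right hmax (by positivity)
      _ = 1 * t := by field_simp
  -- t is admissible
  have hadm : admissible Ω β t := by
    refine ⟨htpos, x₁, subset_closure hx₁, x₂, subset_closure hx₂, ?_, ?_, ?_⟩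
    · rw [← dist_eq_norm]
      have : 2 * t = 2 / β + 2 * ε := by ring
      rw [this]
      linarith
    · exact hcone x₁ r₁ hεr₁ hball₁
    · exact hcone x₂ r₂ hεr₂ hball₂
  -- the admissible set is bounded above
  have hbdd : BddAbove {s | admissible Ω β s} := by
    refine ⟨Metric.diam Ω / 2, ?_⟩
    rintro s ⟨hs, y₁, hy₁, y₂, hy₂, hsep, -, -⟩
    have h1 : ‖y₁ - y₂‖ = dist y₁ y₂ := (dist_eq_norm _ _).symm
    have h2 : dist y₁ y₂ ≤ Metric.diam (closure Ω) :=
      Metric.dist_le_diam_of_mem hb.closure hy₁ hy₂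
    rw [Metric.diam_closure] at h2
    rw [h1] at hsep
    linarith
  constructor
  · have hle : t ≤ sGeom Ω β := le_csSup hbdd hadm
    have h1t : 1 / β < t := by rw [ht]; linarith
    exact lt_of_lt_of_le h1t hle
  · refine ⟨ε, hεpos, ?_⟩
    have : (1 + β * ε) / β = t := by
      rw [ht]; field_simp
    rwa [this]
end

section
/- Let n ≥ 1 and let Ω ⊂ ℝⁿ be a nonempty bounded open set. Then lim_{β→+∞} s_β(Ω) = r₂(Ω), where r₂(Ω) = sup{t > 0 : there exist x₁, x₂ with the open balls B(x₁,t) and B(x₂,t) contained in Ω and disjoint}. Equivalently, lim_{β→+∞} λ^β_{2,∞}(Ω) = 1/r₂(Ω), the second Dirichlet ∞-eigenvalue. -/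
open Set Metric

lemma ball_subset_omega {n : ℕ} {Ω : Set (EuclideanSpace ℝ (Fin n))}
    (ho : IsOpen Ω) {x : EuclideanSpace ℝ (Fin n)} (hx : x ∈ Ω) {r : ℝ} (hr : 0 < r)
    (hfr : ∀ y ∈ frontier Ω, y ∉ ball x r) : ball x r ⊆ Ω := by
  refine IsPreconnected.subset_left_of_subset_union ho isOpen_interior
    (disjoint_left.2 fun z hz hz' => (interior_subset hz' : (z : EuclideanSpace ℝ (Fin n)) ∈ Ωᶜ) hz)
    (fun z hz => ?_) ⟨x, mem_ball_self hr, hx⟩ (convex_ball x r).isPreconnected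
  by_contra hz'
  simp only [mem_union, not_or] at hz'
  obtain ⟨h1, h2⟩ := hz'
  have hzc : z ∈ closure Ω := by
    rw [closure_eq_compl_interior_compl]; exact h2
  exact hfr z (by rw [ho.frontier_eq]; exact ⟨hzc, h1⟩) hz

lemma disjoint_balls_dist {n : ℕ} {x₁ x₂ : EuclideanSpace ℝ (Fin n)} {t : ℝ}
    (h : Disjoint (ball x₁ t) (ball x₂ t)) : 2 * t ≤ dist x₁ x₂ := by
  rcases le_or_gt t 0 with ht | ht
  · linarith [dist_nonneg (x := x₁) (y := x₂)]
  by_contra hlt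
  push_neg at hlt
  have h1 : dist (midpoint ℝ x₁ x₂) x₁ < t := by
    rw [dist_midpoint_left]
    simp only [Real.norm_ofNat]
    linarith [dist_nonneg (x := x₁) (y := x₂)]
  have h2 : dist (midpoint ℝ x₁ x₂) x₂ < t := by
    rw [dist_midpoint_right]
    simp only [Real.norm_ofNat]
    linarith
  exact (disjoint_left.1 h (mem_ball.2 h1) (mem_ball.2 h2))

theorem sGeom_tendsto_r2_at_top
    {n : ℕ} (hn : 1 ≤ n) (Ω : Set (EuclideanSpace ℝ (Fin n)))
    (hne : Ω.Nonempty) (ho : IsOpen Ω) (hb : Bornology.IsBounded Ω) :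
    Filter.Tendsto (fun β : ℝ => sGeom Ω β) Filter.atTop (nhds (r2 Ω)) := by
  set S : Set ℝ := {t | 0 < t ∧ ∃ x₁ x₂ : EuclideanSpace ℝ (Fin n),
    Metric.ball x₁ t ⊆ Ω ∧ Metric.ball x₂ t ⊆ Ω ∧
    Disjoint (Metric.ball x₁ t) (Metric.ball x₂ t)} with hS
  -- S is nonempty
  have hSne : S.Nonempty := by
    obtain ⟨x, hx⟩ := hne
    obtain ⟨ε, hε, hball⟩ := Metric.isOpen_iff.1 ho x hx
    set e : EuclideanSpace ℝ (Fin n) := EuclideanSpace.single (⟨0, hn⟩ : Fin n) (1 : ℝ) with he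
    have hnorme : ‖e‖ = 1 := by
      rw [he, EuclideanSpace.norm_single]; simp
    set a : EuclideanSpace ℝ (Fin n) := (ε/2) • e with ha
    have hna : ‖a‖ = ε/2 := by
      rw [ha, norm_smul, hnorme, Real.norm_eq_abs, abs_of_pos (by linarith)]
      ring
    refine ⟨ε/4, by linarith, x + a, x - a, ?_, ?_, ?_⟩
    · refine (ball_subset_ball' ?_).trans hball
      have : dist (x + a) x = ‖a‖ := by
        rw [dist_eq_norm]; congr 1; abel
      rw [this, hna]; linarith
    · refine (ball_subset_ball' ?_).trans hball
      have : dist (x - a) x = ‖a‖ := by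
        rw [dist_eq_norm]
        have : x - a - x = -a := by abel
        rw [this, norm_neg]
      rw [this, hna]; linarith
    · rw [Set.disjoint_left]
      intro z hz1 hz2
      have hd : dist (x + a) (x - a) = ε := by
        rw [dist_eq_norm]
        have : x + a - (x - a) = (2 : ℝ) • a := by
          rw [two_smul]; abel
        rw [this, norm_smul, hna, Real.norm_ofNat]
        linarith
      have := dist_triangle (x + a) z (x - a)
      rw [hd, dist_comm (x+a) z] at this
      rw [mem_ball] at hz1 hz2
      linarith
  -- S ⊆ admissible set for any β > 0
  have hSsub : ∀ β : ℝ, 0 < β → S ⊆ {t | admissible Ω β t} := by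
    intro β hβ t ht
    obtain ⟨ht0, x₁, x₂, hb1, hb2, hdisj⟩ := ht
    have hcl : ∀ x : EuclideanSpace ℝ (Fin n), ball x t ⊆ Ω → x ∈ closure Ω := by
      intro x hbx
      have : x ∈ closure (ball x t) := by
        rw [closure_ball x (ne_of_gt ht0)]
        exact mem_closedBall_self ht0.le
      exact closure_mono hbx this
    have hcone : ∀ x : EuclideanSpace ℝ (Fin n), ball x t ⊆ Ω →
        ∀ y ∈ frontier Ω, cone x t y ≤ 1 / (β * t) := by
      intro x hbx y hy
      have hyn : y ∉ Ω := by
        rw [ho.frontier_eq] at hy; exact hy.2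
      have hynb : y ∉ ball x t := fun h => hyn (hbx h)
      rw [mem_ball, dist_eq_norm] at hynb
      push_neg at hynb
      have : cone x t y = 0 := by
        unfold cone
        rw [max_eq_right (by linarith), zero_div]
      rw [this]
      positivity
    refine ⟨ht0, x₁, hcl x₁ hb1, x₂, hcl x₂ hb2, ?_, hcone x₁ hb1, hcone x₂ hb2⟩
    rw [← dist_eq_norm]
    exact disjoint_balls_dist hdisj
  -- bounded above
  have hbddA : ∀ β : ℝ, BddAbove {t | admissible Ω β t} := by
    intro β
    obtain ⟨x, hx⟩ := hne
    obtain ⟨R, hR⟩ := (hb.closure).subset_closedBall x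
    refine ⟨R, fun t ht => ?_⟩
    obtain ⟨ht0, x₁, hx₁, x₂, hx₂, hdist, -⟩ := ht
    have h1 := hR hx₁
    have h2 := hR hx₂
    rw [mem_closedBall] at h1 h2
    have : ‖x₁ - x₂‖ = dist x₁ x₂ := (dist_eq_norm _ _).symm
    rw [this] at hdist
    have := dist_triangle x₁ x x₂
    rw [dist_comm x₂ x] at h2
    linarith
  have hSbdd : BddAbove S := (hbddA 1).mono (hSsub 1 one_pos)
  have hr2nonneg : 0 ≤ r2 Ω := by
    obtain ⟨t, ht⟩ := hSne
    exact ht.1.le.trans (le_csSup hSbdd ht)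
  -- lower bound
  have hlow : ∀ β : ℝ, 0 < β → r2 Ω ≤ sGeom Ω β := by
    intro β hβ
    exact csSup_le_csSup (hbddA β) hSne (hSsub β hβ)
  -- upper bound
  have hup : ∀ β : ℝ, 0 < β → sGeom Ω β ≤ r2 Ω + 1/β := by
    intro β hβ
    refine csSup_le (hSne.mono (hSsub β hβ)) (fun t ht => ?_)
    obtain ⟨ht0, x₁, hx₁, x₂, hx₂, hdist, hc1, hc2⟩ := ht
    rcases le_or_gt t (1/β) with h | h
    · linarith
    -- t - 1/β ∈ S
    set r : ℝ := t - 1/β with hrdef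
    have hr0 : 0 < r := by rw [hrdef]; linarith
    have key : ∀ x : EuclideanSpace ℝ (Fin n), x ∈ closure Ω →
        (∀ y ∈ frontier Ω, cone x t y ≤ 1 / (β * t)) → ball x r ⊆ Ω := by
      intro x hxcl hcx
      have hdistf : ∀ y ∈ frontier Ω, r ≤ ‖y - x‖ := by
        intro y hy
        have := hcx y hy
        unfold cone at this
        rw [div_le_div_iff₀ ht0 (by positivity)] at this
        have hmax : t - ‖y - x‖ ≤ max (t - ‖y - x‖) 0 := le_max_left _ _
        have h1 : (t - ‖y - x‖) * (β * t) ≤ 1 * t := by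
          calc (t - ‖y - x‖) * (β * t) ≤ max (t - ‖y - x‖) 0 * (β * t) :=
                mul_le_mul_of_nonneg_right hmax (by positivity)
            _ ≤ 1 * t := this
        have h2 : t - ‖y - x‖ ≤ 1/β := by
          rw [le_div_iff₀ hβ]
          nlinarith [h1]
        rw [hrdef]
        linarith
      have hxΩ : x ∈ Ω := by
        have hnf : x ∉ frontier Ω := by
          intro hf
          have := hdistf x hf
          simp at this
          linarith
        have : x ∈ interior Ω := by
          rcases (closure_eq_interior_union_frontier Ω ▸ hxcl) with h | h
          · exact h
          · exact absurd h hnf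
        rwa [ho.interior_eq] at this
      refine ball_subset_omega ho hxΩ hr0 (fun y hy hyb => ?_)
      rw [mem_ball, dist_eq_norm] at hyb
      exact absurd (hdistf y hy) (by linarith)
    have hmem : r ∈ S := by
      refine ⟨hr0, x₁, x₂, key x₁ hx₁ hc1, key x₂ hx₂ hc2, ?_⟩
      rw [Set.disjoint_left]
      intro z hz1 hz2
      rw [mem_ball] at hz1 hz2
      have := dist_triangle x₁ z x₂
      rw [dist_comm x₁ z, dist_eq_norm] at this
      have hrt : r < t := by simp [hrdef]; positivity
      linarith
    have hle := le_csSup hSbdd hmem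
    have hr2S : r2 Ω = sSup S := by rw [hS]; rfl
    rw [hrdef] at hle
    rw [hr2S]
    linarith
  -- squeeze
  have h1 : Filter.Tendsto (fun β : ℝ => r2 Ω + 1/β) Filter.atTop (nhds (r2 Ω)) := by
    have : Filter.Tendsto (fun β : ℝ => 1/β) Filter.atTop (nhds 0) := by
      simpa only [one_div] using tendsto_inv_atTop_zero
    simpa using tendsto_const_nhds.add this
  refine tendsto_of_tendsto_of_tendsto_of_le_of_le' tendsto_const_nhds h1 ?_ ?_
  · filter_upwards [Filter.eventually_gt_atTop 0] with β hβ using hlow β hβ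
  · filter_upwards [Filter.eventually_gt_atTop 0] with β hβ using hup β hβ
end

section
/- Let n ≥ 2, let Ω ⊂ ℝⁿ be a nonempty bounded open set whose topological boundary ∂Ω has finite (n−1)-dimensional Hausdorff measure, and let β > 0. Let v : ℝⁿ → ℝ be Lipschitz and not identically zero on Ω. Then lim_{p→∞} [ ( ∫_Ω |Dv|^p dx + β^p ∫_{∂Ω} |v|^p dH^{n−1} ) / ∫_Ω |v|^p dx ]^{1/p} = max{ esssup_{x∈Ω} |Dv(x)|, β · esssup_{H^{n−1}⌊∂Ω} |v| } / sup_Ω |v|, where Dv denotes the derivative of v, which exists Lebesgue-almost everywhere by Rademacher's theorem, dx is Lebesgue measure, and H^{n−1}⌊∂Ω is the (n−1)-dimensional Hausdorff measure restricted to ∂Ω. -/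
/-!
The `L^p` norms of a nonnegative, essentially bounded function `f` on a finite measure space tend
to its essential supremum: Markov's inequality gives `c * μ {c ≤ f} ^ (1 / p) ≤ ‖f‖_p`, if
`f ≤ c` a.e. then `‖f‖_p ≤ c * μ univ ^ (1 / p)`, and `m ^ (1 / p) → 1` for every `m > 0`.
Apply this to `‖Dv‖` on `Ω`, to `|v|` on `∂Ω` and to `|v|` on `Ω`, and squeeze the numerator by
`max a b ≤ (a ^ p + b ^ p) ^ (1 / p) ≤ 2 ^ (1 / p) * max a b`. The essential supremum of the
continuous `|v|` over the open set `Ω` is its supremum, as Lebesgue measure charges every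
nonempty open set.
-/

open Set MeasureTheory Filter Topology

lemma tendsto_const_rpow_one_div_atTop {m : ℝ} (hm : 0 < m) :
    Tendsto (fun p : ℝ => m ^ (1 / p)) atTop (𝓝 1) := by
  simpa [Function.comp_def] using (Real.continuousAt_const_rpow hm.ne' (b := 0)).tendsto.comp
    (tendsto_const_nhds.div_atTop tendsto_id : Tendsto (fun p : ℝ => 1 / p) atTop (𝓝 0))

lemma rpow_mul_rpow_one_div {c m p : ℝ} (hc : 0 ≤ c) (hm : 0 ≤ m) (hp : p ≠ 0) :
    (c ^ p * m) ^ (1 / p) = c * m ^ (1 / p) := by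
  rw [Real.mul_rpow (Real.rpow_nonneg hc p) hm, ← Real.rpow_mul hc, mul_one_div_cancel hp,
    Real.rpow_one]

lemma Filter.Tendsto.const_rpow_mul_rpow_one_div {G : ℝ → ℝ} {b c : ℝ} (hc : 0 ≤ c)
    (hG0 : ∀ p, 0 ≤ G p) (hG : Tendsto (fun p => G p ^ (1 / p)) atTop (𝓝 b)) :
    Tendsto (fun p => (c ^ p * G p) ^ (1 / p)) atTop (𝓝 (c * b)) :=
  (hG.const_mul c).congr' <| by
    filter_upwards [eventually_ne_atTop 0] with p hp
    rw [rpow_mul_rpow_one_div hc (hG0 p) hp]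

lemma tendsto_rpow_one_div_add {F G : ℝ → ℝ} {a b : ℝ} (hF0 : ∀ p, 0 ≤ F p)
    (hG0 : ∀ p, 0 ≤ G p) (hF : Tendsto (fun p => F p ^ (1 / p)) atTop (𝓝 a))
    (hG : Tendsto (fun p => G p ^ (1 / p)) atTop (𝓝 b)) :
    Tendsto (fun p => (F p + G p) ^ (1 / p)) atTop (𝓝 (max a b)) := by
  have hmax := hF.max hG
  have hupper : Tendsto (fun p => 2 ^ (1 / p) * max (F p ^ (1 / p)) (G p ^ (1 / p))) atTop
      (𝓝 (max a b)) := by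
    simpa using (tendsto_const_rpow_one_div_atTop two_pos).mul hmax
  refine tendsto_of_tendsto_of_tendsto_of_le_of_le' hmax hupper ?_ ?_ <;>
    filter_upwards [eventually_gt_atTop 0] with p hp
  · exact max_le (by gcongr; exacts [hF0 p, le_add_of_nonneg_right (hG0 p)])
      (by gcongr; exacts [hG0 p, le_add_of_nonneg_left (hF0 p)])
  · have hmax_rpow : max (F p) (G p) ^ (1 / p) ≤ max (F p ^ (1 / p)) (G p ^ (1 / p)) := by
      rcases max_choice (F p) (G p) with h | h <;> rw [h]
      exacts [le_max_left _ _, le_max_right _ _]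
    calc (F p + G p) ^ (1 / p) ≤ (2 * max (F p) (G p)) ^ (1 / p) := by
          gcongr
          · exact add_nonneg (hF0 p) (hG0 p)
          · rw [two_mul]; exact add_le_add (le_max_left _ _) (le_max_right _ _)
      _ = 2 ^ (1 / p) * max (F p) (G p) ^ (1 / p) :=
          Real.mul_rpow zero_le_two (le_max_of_le_left (hF0 p))
      _ ≤ 2 ^ (1 / p) * max (F p ^ (1 / p)) (G p ^ (1 / p)) := by gcongr

section EssSup

variable {α : Type*} [MeasurableSpace α] {μ : Measure α} {f : α → ℝ} {p : ℝ}

lemma integrable_rpow_of_ae_le [IsFiniteMeasure μ] (hf : AEMeasurable f μ)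
    (h0 : ∀ x, 0 ≤ f x) {C : ℝ} (hC : ∀ᵐ x ∂μ, f x ≤ C) (hp : 0 ≤ p) :
    Integrable (fun x => f x ^ p) μ :=
  (integrable_const (C ^ p)).mono' (hf.pow_const p).aestronglyMeasurable <| by
    filter_upwards [hC] with x hx
    rw [Real.norm_of_nonneg (Real.rpow_nonneg (h0 x) p)]
    exact Real.rpow_le_rpow (h0 x) hx hp

lemma mul_measureReal_rpow_one_div_le (hint : Integrable (fun x => f x ^ p) μ)
    (h0 : ∀ x, 0 ≤ f x) {c : ℝ} (hc : 0 ≤ c) (hp : 0 < p) :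
    c * μ.real {x | c ≤ f x} ^ (1 / p) ≤ (∫ x, f x ^ p ∂μ) ^ (1 / p) := by
  have hset : {x | c ≤ f x} = {x | c ^ p ≤ f x ^ p} := by
    ext x
    exact (Real.rpow_le_rpow_iff hc (h0 x) hp).symm
  rw [← rpow_mul_rpow_one_div hc measureReal_nonneg hp.ne', hset]
  gcongr
  exact mul_meas_ge_le_integral_of_nonneg (ae_of_all _ fun x => Real.rpow_nonneg (h0 x) p) hint _

lemma rpow_integral_rpow_one_div_le [IsFiniteMeasure μ] (hint : Integrable (fun x => f x ^ p) μ)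
    (h0 : ∀ x, 0 ≤ f x) {c : ℝ} (hc0 : 0 ≤ c) (hc : ∀ᵐ x ∂μ, f x ≤ c) (hp : 0 < p) :
    (∫ x, f x ^ p ∂μ) ^ (1 / p) ≤ c * μ.real univ ^ (1 / p) := by
  rw [← rpow_mul_rpow_one_div hc0 measureReal_nonneg hp.ne']
  gcongr
  · exact integral_nonneg fun x => Real.rpow_nonneg (h0 x) p
  calc ∫ x, f x ^ p ∂μ ≤ ∫ _, c ^ p ∂μ :=
        integral_mono_ae hint (integrable_const _)
          (hc.mono fun x hx => Real.rpow_le_rpow (h0 x) hx hp.le)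
    _ = c ^ p * μ.real univ := by rw [integral_const, smul_eq_mul, mul_comm]

theorem tendsto_integral_rpow_one_div_essSup [IsFiniteMeasure μ] (hf : AEMeasurable f μ)
    (h0 : ∀ x, 0 ≤ f x) {C : ℝ} (hC : ∀ᵐ x ∂μ, f x ≤ C) :
    Tendsto (fun p : ℝ => (∫ x, f x ^ p ∂μ) ^ (1 / p)) atTop (𝓝 (essSup f μ)) := by
  rcases eq_zero_or_neZero μ with rfl | hμ
  · have hzero : essSup f (0 : Measure α) = 0 := by simp [essSup_eq_sInf]
    rw [hzero]
    refine tendsto_const_nhds.congr' ?_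
    filter_upwards [eventually_gt_atTop 0] with p hp
    rw [integral_zero_measure, Real.zero_rpow (one_div_pos.2 hp).ne']
  have hint : ∀ p : ℝ, 0 < p → Integrable (fun x => f x ^ p) μ :=
    fun p hp => integrable_rpow_of_ae_le hf h0 hC hp.le
  refine tendsto_order.2 ⟨fun a ha => ?_, fun b hb => ?_⟩
  · rcases lt_or_ge a 0 with ha0 | ha0
    · exact .of_forall fun p => ha0.trans_le <| Real.rpow_nonneg
        (integral_nonneg fun x => Real.rpow_nonneg (h0 x) p) _
    obtain ⟨c, hac, hc⟩ := exists_between ha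
    have hfreq : ∃ᵐ x ∂μ, c < f x :=
      frequently_lt_of_lt_limsup (isCoboundedUnder_le_of_le _ h0) hc
    have hpos : 0 < μ.real {x | c ≤ f x} :=
      ENNReal.toReal_pos (fun h => frequently_ae_iff.1 hfreq
        (measure_mono_null (fun x (hx : c < f x) => hx.le) h)) (measure_ne_top μ _)
    have hlim := (tendsto_const_rpow_one_div_atTop hpos).const_mul c
    rw [mul_one] at hlim
    filter_upwards [hlim.eventually (eventually_gt_nhds hac), eventually_gt_atTop 0]
      with p hlt hp
    exact hlt.trans_le (mul_measureReal_rpow_one_div_le (hint p hp) h0 (ha0.trans hac.le) hp)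
  · obtain ⟨c, hc, hcb⟩ := exists_between hb
    have hae : ∀ᵐ x ∂μ, f x < c := ae_lt_of_essSup_lt hc ⟨C, hC⟩
    obtain ⟨x, hx⟩ := hae.exists
    have hlim := (tendsto_const_rpow_one_div_atTop (measureReal_univ_pos (μ := μ))).const_mul c
    rw [mul_one] at hlim
    filter_upwards [hlim.eventually (eventually_lt_nhds hcb), eventually_gt_atTop 0]
      with p hlt hp
    exact (rpow_integral_rpow_one_div_le (hint p hp) h0 ((h0 x).trans hx.le)
      (hae.mono fun x hx => hx.le) hp).trans_lt hlt

end EssSup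

theorem essSup_restrict_eq_sSup_image {X : Type*} [TopologicalSpace X] [MeasurableSpace X]
    [OpensMeasurableSpace X] (μ : Measure X) [μ.IsOpenPosMeasure] {U : Set X} (hU : IsOpen U)
    (hne : U.Nonempty) {g : X → ℝ} (hg : ContinuousOn g U) (hbdd : BddAbove (g '' U)) :
    essSup g (μ.restrict U) = sSup (g '' U) := by
  have hnull : {a | μ.restrict U {x | a < g x} = 0} = upperBounds (g '' U) := by
    ext a
    have hopen : IsOpen (U ∩ {x | a < g x}) := hg.isOpen_inter_preimage hU isOpen_Ioi
    rw [mem_ofPred_eq, Measure.restrict_apply' hU.measurableSet, inter_comm,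
      hopen.measure_eq_zero_iff μ, mem_upperBounds, forall_mem_image, eq_empty_iff_forall_notMem]
    simp
  rw [essSup_eq_sInf, hnull, csInf_upperBounds_eq_csSup hbdd (hne.image g)]

theorem tendsto_rayleigh_quotient_rpow_general
    {n : ℕ} (Ω : Set (EuclideanSpace ℝ (Fin n)))
    (ho : IsOpen Ω) (hb : Bornology.IsBounded Ω)
    (hfr : μH[(n : ℝ) - 1] (frontier Ω) < ⊤)
    (β : ℝ) (hβ : 0 < β)
    (v : EuclideanSpace ℝ (Fin n) → ℝ) (L : NNReal) (hv : LipschitzWith L v)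
    (hvne : ∃ x ∈ Ω, v x ≠ 0) :
    Filter.Tendsto (fun p : ℝ =>
      (((∫ x in Ω, ‖fderiv ℝ v x‖ ^ p) +
          β ^ p * ∫ y in frontier Ω, |v y| ^ p ∂μH[(n : ℝ) - 1]) /
        ∫ x in Ω, |v x| ^ p) ^ (1 / p)) Filter.atTop
      (nhds (max (essSup (fun x => ‖fderiv ℝ v x‖) (MeasureTheory.volume.restrict Ω))
          (β * essSup (fun y => |v y|) ((μH[(n : ℝ) - 1]).restrict (frontier Ω))) /
        sSup ((fun x => |v x|) '' Ω))) := by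
  obtain ⟨x₀, hx₀, hvx₀⟩ := hvne
  have : IsFiniteMeasure (volume.restrict Ω) := isFiniteMeasure_restrict.2 hb.measure_lt_top.ne
  have : IsFiniteMeasure (μH[(n : ℝ) - 1].restrict (frontier Ω)) :=
    isFiniteMeasure_restrict.2 hfr.ne
  obtain ⟨K, hK⟩ := isBounded_iff_forall_norm_le.1 (hv.isBounded_image hb.closure)
  have hvK : ∀ y ∈ closure Ω, |v y| ≤ K := fun y hy => hK _ (mem_image_of_mem v hy)
  have habs := hv.continuous.abs
  have hgrad := tendsto_integral_rpow_one_div_essSup (μ := volume.restrict Ω)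
    (measurable_fderiv ℝ v).norm.aemeasurable (fun x => norm_nonneg _)
    (ae_of_all _ fun x => norm_fderiv_le_of_lipschitz ℝ hv)
  have hbdry := tendsto_integral_rpow_one_div_essSup
    (μ := μH[(n : ℝ) - 1].restrict (frontier Ω)) habs.aemeasurable (fun x => abs_nonneg _)
    (ae_restrict_of_forall_mem isClosed_frontier.measurableSet
      fun y hy => hvK y (frontier_subset_closure hy))
  have hden := tendsto_integral_rpow_one_div_essSup (μ := volume.restrict Ω) habs.aemeasurable
    (fun x => abs_nonneg _)
    (ae_restrict_of_forall_mem ho.measurableSet fun y hy => hvK y (subset_closure hy))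
  have hbddΩ : BddAbove ((fun x => |v x|) '' Ω) :=
    ⟨K, forall_mem_image.2 fun y hy => hvK y (subset_closure hy)⟩
  rw [essSup_restrict_eq_sSup_image volume ho ⟨x₀, hx₀⟩ habs.continuousOn hbddΩ] at hden
  have hsup : 0 < sSup ((fun x => |v x|) '' Ω) :=
    (abs_pos.2 hvx₀).trans_le (le_csSup hbddΩ (mem_image_of_mem _ hx₀))
  have hnum := tendsto_rpow_one_div_add (fun p => by positivity) (fun p => by positivity) hgrad
    (hbdry.const_rpow_mul_rpow_one_div hβ.le fun p => by positivity)
  refine (hnum.div hden hsup.ne').congr' ?_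
  filter_upwards [eventually_gt_atTop 0] with p hp
  exact (Real.div_rpow (by positivity) (by positivity) _).symm

theorem tendsto_rayleigh_quotient_rpow
    {n : ℕ} (hn : 2 ≤ n) (Ω : Set (EuclideanSpace ℝ (Fin n)))
    (hne : Ω.Nonempty) (ho : IsOpen Ω) (hb : Bornology.IsBounded Ω)
    (hfr : μH[(n : ℝ) - 1] (frontier Ω) < ⊤)
    (β : ℝ) (hβ : 0 < β)
    (v : EuclideanSpace ℝ (Fin n) → ℝ) (L : NNReal) (hv : LipschitzWith L v)
    (hvne : ∃ x ∈ Ω, v x ≠ 0) :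
    Filter.Tendsto (fun p : ℝ =>
      (((∫ x in Ω, ‖fderiv ℝ v x‖ ^ p) +
          β ^ p * ∫ y in frontier Ω, |v y| ^ p ∂μH[(n : ℝ) - 1]) /
        ∫ x in Ω, |v x| ^ p) ^ (1 / p)) Filter.atTop
      (nhds (max (essSup (fun x => ‖fderiv ℝ v x‖) (MeasureTheory.volume.restrict Ω))
          (β * essSup (fun y => |v y|) ((μH[(n : ℝ) - 1]).restrict (frontier Ω))) /
        sSup ((fun x => |v x|) '' Ω))) :=
  tendsto_rayleigh_quotient_rpow_general Ω ho hb hfr β hβ v L hv hvne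
end

section
/- Let K be a nonempty compact topological space and let γ : [0,1] → C(K, ℝ) be continuous with respect to the supremum norm on C(K, ℝ). Assume that sup_{x∈K} |γ(t)(x)| = 1 for every t ∈ [0,1], that γ(0) ≥ 0 on K, and that γ(1) ≤ 0 on K. Then there exists t₀ ∈ [0,1] such that sup_{x∈K} (γ(t₀)(x))⁺ = sup_{x∈K} (γ(t₀)(x))⁻ = 1, where w⁺ = max(w,0) and w⁻ = max(−w,0). -/
open Set

/-! The function `t ↦ ‖γ(t)⁺‖ - ‖γ(t)⁻‖` is continuous, since the positive and negative parts are
1-Lipschitz for any solid norm; it is `‖γ 0‖ ≥ 0` at `0` and `-‖γ 1‖ ≤ 0` at `1`, so it vanishes at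
some `t₀`. For the sup norm, `‖f‖ = max ‖f⁺‖ ‖f⁻‖`, so at `t₀` both parts have norm `‖γ t₀‖ = 1`. -/

theorem abs_eq_max_posPart_negPart {α : Type*} [AddCommGroup α] [LinearOrder α]
    [IsOrderedAddMonoid α] (a : α) : |a| = max a⁺ a⁻ := by
  rcases le_total a 0 with h | h
  · rw [abs_of_nonpos h, posPart_eq_zero.2 h, negPart_eq_neg.2 h, max_eq_right (neg_nonneg.2 h)]
  · rw [abs_of_nonneg h, posPart_eq_self.2 h, negPart_eq_zero.2 h, max_eq_left h]

theorem exists_norm_posPart_eq_norm_negPart {E : Type*} [NormedAddCommGroup E] [Lattice E]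
    [HasSolidNorm E] [IsOrderedAddMonoid E] {γ : ℝ → E} {a b : ℝ} (hab : a ≤ b)
    (hγ : ContinuousOn γ (Icc a b)) (ha : 0 ≤ γ a) (hb : γ b ≤ 0) :
    ∃ t ∈ Icc a b, ‖(γ t)⁺‖ = ‖(γ t)⁻‖ := by
  have hcont : ContinuousOn (fun t => ‖(γ t)⁺‖ - ‖(γ t)⁻‖) (Icc a b) :=
    (continuous_posPart.norm.comp_continuousOn hγ).sub
      (continuous_negPart.norm.comp_continuousOn hγ)
  have hzero_mem : (0 : ℝ) ∈ Icc (‖(γ b)⁺‖ - ‖(γ b)⁻‖) (‖(γ a)⁺‖ - ‖(γ a)⁻‖) := by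
    simp [posPart_eq_zero.2 hb, negPart_eq_zero.2 ha]
  obtain ⟨t, ht, hzero⟩ := intermediate_value_Icc' hab hcont hzero_mem
  exact ⟨t, ht, sub_eq_zero.1 hzero⟩

namespace ContinuousMap

variable {α : Type*} [TopologicalSpace α]

@[simp]
theorem posPart_apply {β : Type*} [TopologicalSpace β] [Lattice β] [TopologicalLattice β]
    [AddGroup β] [IsTopologicalAddGroup β] (f : C(α, β)) (x : α) : f⁺ x = (f x)⁺ :=
  rfl

@[simp]
theorem negPart_apply {β : Type*} [TopologicalSpace β] [Lattice β] [TopologicalLattice β]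
    [AddGroup β] [IsTopologicalAddGroup β] (f : C(α, β)) (x : α) : f⁻ x = (f x)⁻ :=
  rfl

variable [CompactSpace α]

instance instHasSolidNorm {β : Type*} [NormedAddCommGroup β] [Lattice β] [HasSolidNorm β]
    [IsOrderedAddMonoid β] : HasSolidNorm C(α, β) where
  solid f g h := (f.norm_le (norm_nonneg g)).2 fun x =>
    (HasSolidNorm.solid (by simpa only [abs_apply] using le_def.1 h x)).trans
      (g.norm_coe_le_norm x)

theorem sSup_range_abs_eq_norm (f : C(α, ℝ)) : sSup (range fun x => |f x|) = ‖f‖ :=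
  f.norm_eq_iSup_norm.symm

theorem sSup_range_posPart_eq_norm_posPart (f : C(α, ℝ)) :
    sSup (range fun x => (f x)⁺) = ‖f⁺‖ := by
  rw [← sSup_range_abs_eq_norm]
  simp only [posPart_apply, abs_of_nonneg (posPart_nonneg _)]

theorem norm_eq_max_norm_posPart_norm_negPart (f : C(α, ℝ)) : ‖f‖ = max ‖f⁺‖ ‖f⁻‖ := by
  refine le_antisymm ((f.norm_le (by positivity)).2 fun x => ?_) (max_le ?_ ?_)
  · rw [Real.norm_eq_abs, abs_eq_max_posPart_negPart]
    exact max_le_max ((Real.le_norm_self _).trans (f⁺.norm_coe_le_norm x))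
      ((Real.le_norm_self _).trans (f⁻.norm_coe_le_norm x))
  · exact HasSolidNorm.solid (le_def.2 fun x => by
      simp [abs_of_nonneg, abs_eq_max_posPart_negPart (f x)])
  · exact HasSolidNorm.solid (le_def.2 fun x => by
      simp [abs_of_nonneg, abs_eq_max_posPart_negPart (f x)])

end ContinuousMap

theorem exists_balanced_function_on_path_general
    {K : Type*} [TopologicalSpace K] [CompactSpace K]
    (γ : ℝ → C(K, ℝ)) (hγ : ContinuousOn γ (Icc (0:ℝ) 1))
    (hnorm : ∀ t ∈ Icc (0:ℝ) 1, sSup (Set.range fun x => |γ t x|) = 1)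
    (h0 : ∀ x : K, 0 ≤ γ 0 x) (h1 : ∀ x : K, γ 1 x ≤ 0) :
    ∃ t₀ ∈ Icc (0:ℝ) 1,
      sSup (Set.range fun x => max (γ t₀ x) 0) = 1 ∧
      sSup (Set.range fun x => max (-γ t₀ x) 0) = 1 := by
  obtain ⟨t, ht, hbalanced⟩ := exists_norm_posPart_eq_norm_negPart zero_le_one hγ h0 h1
  have hpart : ‖(γ t)⁺‖ = 1 := by
    have hmax := (γ t).norm_eq_max_norm_posPart_norm_negPart
    rwa [← ContinuousMap.sSup_range_abs_eq_norm, hnorm t ht, ← hbalanced, max_self, eq_comm] at hmax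
  refine ⟨t, ht, ?_, ?_⟩
  · exact (γ t).sSup_range_posPart_eq_norm_posPart.trans hpart
  · exact (-γ t).sSup_range_posPart_eq_norm_posPart.trans (hbalanced ▸ hpart)

theorem exists_balanced_function_on_path
    {K : Type*} [TopologicalSpace K] [CompactSpace K] [Nonempty K]
    (γ : ℝ → C(K, ℝ)) (hγ : ContinuousOn γ (Icc (0:ℝ) 1))
    (hnorm : ∀ t ∈ Icc (0:ℝ) 1, sSup (Set.range fun x => |γ t x|) = 1)
    (h0 : ∀ x : K, 0 ≤ γ 0 x) (h1 : ∀ x : K, γ 1 x ≤ 0) :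
    ∃ t₀ ∈ Icc (0:ℝ) 1,
      sSup (Set.range fun x => max (γ t₀ x) 0) = 1 ∧
      sSup (Set.range fun x => max (-γ t₀ x) 0) = 1 :=
  exists_balanced_function_on_path_general γ hγ hnorm h0 h1
end

section
/- Let β > 0, let ℓ > 0 and let Ω = (0,ℓ) × (0,ℓ) ⊂ ℝ² be the open square of side ℓ, whose Euclidean diameter is D = ℓ√2. Then: (i) if β ≥ √2/ℓ (i.e. β ≥ 2/D), then s_β(Ω) = (2 + βℓ)/((2 + √2)β), i.e. λ_{2,∞}(Ω) = (1 + √2/2)β / (1 + (√2/2)β D/2); (ii) if β < √2/ℓ (i.e. β < 2/D), then s_β(Ω) = ℓ/√2 = D/2, i.e. λ_{2,∞}(Ω) = 2/D. -/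
open Set Metric

/-!
The cone `C_{x,t}` exceeds `1/(βt)` exactly at the points closer to `x` than `t - 1/β`, so `t` is
admissible iff the closed domain contains two points at distance `≥ 2t` that both lie at distance
`≥ t - 1/β` from the boundary. In the cube `(0,l)ⁿ` the points at distance `≥ r ≥ 0` from the
boundary form the concentric cube `[r, l - r]ⁿ`, whose diameter `√n (l - 2r)` is realised by
opposite corners. Hence `t` is admissible iff `2t ≤ √n (l - 2 max (t - 1/β) 0)`, a sublevel set of a
strictly increasing function of `t`, and `s_β` is the root `T` of the corresponding equation. For
`n = 2` that root is `l/√2` when `l/√2 ≤ 1/β`, and `(2 + βl)/((2 + √2)β)` otherwise.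
-/

def openCube (n : ℕ) (l : ℝ) : Set (EuclideanSpace ℝ (Fin n)) := {p | ∀ i, p i ∈ Ioo 0 l}

def closedCube (n : ℕ) (l : ℝ) : Set (EuclideanSpace ℝ (Fin n)) := {p | ∀ i, p i ∈ Icc 0 l}

lemma cone_le_one_div_mul_iff {n : ℕ} {x y : EuclideanSpace ℝ (Fin n)} {β t : ℝ} (hβ : 0 < β)
    (ht : 0 < t) : cone x t y ≤ 1 / (β * t) ↔ t - 1 / β ≤ dist x y := by
  rw [cone, ← div_div, div_le_div_iff_of_pos_right ht, max_le_iff,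
    and_iff_left (one_div_pos.2 hβ).le, sub_le_comm, dist_comm, dist_eq_norm]

lemma admissible_iff_infDist {n : ℕ} {Ω : Set (EuclideanSpace ℝ (Fin n))} {β t : ℝ} (hβ : 0 < β)
    (hΩ : (frontier Ω).Nonempty) :
    admissible Ω β t ↔ 0 < t ∧ ∃ x₁ ∈ closure Ω, ∃ x₂ ∈ closure Ω, 2 * t ≤ dist x₁ x₂ ∧
      t - 1 / β ≤ infDist x₁ (frontier Ω) ∧ t - 1 / β ≤ infDist x₂ (frontier Ω) := by
  refine and_congr_right fun ht => ?_
  simp only [cone_le_one_div_mul_iff hβ ht, le_infDist hΩ, dist_eq_norm]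

section Euclidean

variable {ι : Type*} [Fintype ι]

lemma EuclideanSpace.dist_le_of_forall_mem_Icc [Nonempty ι] {x y : EuclideanSpace ℝ ι} {a b : ℝ}
    (hx : ∀ i, x i ∈ Icc a b) (hy : ∀ i, y i ∈ Icc a b) :
    dist x y ≤ √(Fintype.card ι) * (b - a) := by
  have hab : 0 ≤ b - a := sub_nonneg.2 ((hx (Classical.arbitrary ι)).1.trans (hx _).2)
  calc dist x y = √(∑ i, dist (x i) (y i) ^ 2) := EuclideanSpace.dist_eq x y
    _ ≤ √(∑ _ : ι, (b - a) ^ 2) := Real.sqrt_le_sqrt <| Finset.sum_le_sum fun i _ =>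
          pow_le_pow_left₀ dist_nonneg (Real.dist_le_of_mem_Icc (hx i) (hy i)) 2
    _ = √(Fintype.card ι) * (b - a) := by
          rw [Finset.sum_const, Finset.card_univ, nsmul_eq_mul, Real.sqrt_mul (Nat.cast_nonneg _),
            Real.sqrt_sq hab]

lemma EuclideanSpace.dist_const (a b : ℝ) :
    dist (WithLp.toLp 2 fun _ : ι => a) (WithLp.toLp 2 fun _ : ι => b) =
      √(Fintype.card ι) * |a - b| := by
  rw [EuclideanSpace.dist_eq]
  simp [Real.sqrt_mul, Real.sqrt_sq_eq_abs, Real.dist_eq]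

end Euclidean

section Cube

variable {n : ℕ} {l : ℝ}

lemma openCube_eq_preimage :
    openCube n l = EuclideanSpace.equiv (Fin n) ℝ ⁻¹' univ.pi fun _ => Ioo 0 l := by
  ext; simp only [openCube, mem_preimage, mem_univ_pi, mem_ofPred_eq]; rfl

lemma closedCube_eq_preimage :
    closedCube n l = EuclideanSpace.equiv (Fin n) ℝ ⁻¹' univ.pi fun _ => Icc 0 l := by
  ext; simp only [closedCube, mem_preimage, mem_univ_pi, mem_ofPred_eq]; rfl

lemma isOpen_openCube : IsOpen (openCube n l) := by
  rw [openCube_eq_preimage]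
  exact (isOpen_set_pi finite_univ fun _ _ => isOpen_Ioo).preimage
    (EuclideanSpace.equiv (Fin n) ℝ).continuous

lemma closure_openCube (hl : 0 < l) : closure (openCube n l) = closedCube n l := by
  rw [openCube_eq_preimage, closedCube_eq_preimage, ← ContinuousLinearEquiv.coe_toHomeomorph,
    ← Homeomorph.preimage_closure, closure_pi_set]
  simp [closure_Ioo hl.ne]

lemma frontier_openCube (hl : 0 < l) : frontier (openCube n l) = closedCube n l \ openCube n l := by
  rw [frontier, closure_openCube hl, isOpen_openCube.interior_eq]

lemma zero_mem_frontier_openCube [NeZero n] (hl : 0 < l) :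
    (0 : EuclideanSpace ℝ (Fin n)) ∈ frontier (openCube n l) := by
  rw [frontier_openCube hl]
  exact ⟨fun _ => ⟨le_rfl, hl.le⟩, fun h => (h 0).1.false⟩

lemma add_single_mem_frontier_openCube (hl : 0 < l) {x : EuclideanSpace ℝ (Fin n)}
    (hx : x ∈ closedCube n l) (i : Fin n) {a : ℝ} (ha : a = 0 ∨ a = l) :
    x + EuclideanSpace.single i (a - x i) ∈ frontier (openCube n l) := by
  have hi : (x + EuclideanSpace.single i (a - x i)) i = a := by simp
  rw [frontier_openCube hl]
  refine ⟨fun j => ?_, fun h => ?_⟩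
  · rcases eq_or_ne j i with rfl | hj
    · rw [hi]; rcases ha with rfl | rfl <;> simp [hl.le]
    · simpa [hj] using hx j
  · have := h i; rw [hi] at this; rcases ha with rfl | rfl <;> simp at this

lemma le_infDist_frontier_openCube_iff [NeZero n] (hl : 0 < l) {x : EuclideanSpace ℝ (Fin n)}
    (hx : x ∈ closedCube n l) {r : ℝ} :
    r ≤ infDist x (frontier (openCube n l)) ↔ ∀ i, x i ∈ Icc r (l - r) := by
  rw [le_infDist ⟨0, zero_mem_frontier_openCube hl⟩]
  constructor
  · intro h i
    have h₀ := h (add_single_mem_frontier_openCube hl hx i (Or.inl rfl))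
    have h₁ := h (add_single_mem_frontier_openCube hl hx i (Or.inr rfl))
    simp only [dist_self_add_right, PiLp.norm_single, Real.norm_eq_abs, zero_sub, abs_neg,
      abs_of_nonneg (hx i).1, abs_of_nonneg (sub_nonneg.2 (hx i).2)] at h₀ h₁
    exact ⟨h₀, by linarith⟩
  · intro h y hy
    obtain ⟨i, hi⟩ : ∃ i, y i ∉ Ioo 0 l := by
      simpa [openCube] using ((frontier_openCube hl).subset hy).2
    rw [mem_Ioo, not_and_or, not_lt, not_lt] at hi
    calc r ≤ |x i - y i| := by
          rcases hi with hi | hi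
          · exact le_abs.2 (Or.inl (by linarith [(h i).1]))
          · exact le_abs.2 (Or.inr (by linarith [(h i).2]))
      _ ≤ dist x y := PiLp.dist_apply_le x y i

lemma admissible_openCube_iff [NeZero n] {β t : ℝ} (hβ : 0 < β) (hl : 0 < l) :
    admissible (openCube n l) β t ↔ 0 < t ∧ 2 * t ≤ √n * (l - 2 * max (t - 1 / β) 0) := by
  rw [admissible_iff_infDist hβ ⟨0, zero_mem_frontier_openCube hl⟩, closure_openCube hl]
  refine and_congr_right fun ht => ?_
  set r := max (t - 1 / β) 0 with hr
  have hr₀ : 0 ≤ r := le_max_right _ _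
  have key : ∀ x ∈ closedCube n l,
      t - 1 / β ≤ infDist x (frontier (openCube n l)) ↔ ∀ i, x i ∈ Icc r (l - r) := fun x hx => by
    rw [← le_infDist_frontier_openCube_iff hl hx, hr, max_le_iff, and_iff_left infDist_nonneg]
  constructor
  · rintro ⟨x₁, hx₁, x₂, hx₂, hd, h₁, h₂⟩
    have := EuclideanSpace.dist_le_of_forall_mem_Icc ((key x₁ hx₁).1 h₁) ((key x₂ hx₂).1 h₂)
    rw [Fintype.card_fin] at this
    linarith
  · intro h
    have hlr : 0 ≤ l - 2 * r :=
      (pos_of_mul_pos_right (by linarith) (Real.sqrt_nonneg n)).le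
    refine ⟨WithLp.toLp 2 fun _ => r, fun _ => ⟨hr₀, by linarith⟩,
      WithLp.toLp 2 fun _ => l - r, fun _ => ⟨by linarith, by linarith⟩, ?_, ?_, ?_⟩
    · rw [EuclideanSpace.dist_const, Fintype.card_fin, abs_sub_comm, abs_of_nonneg (by linarith)]
      linarith
    · exact (key _ fun _ => ⟨hr₀, by linarith⟩).2 fun _ => ⟨le_rfl, by linarith⟩
    · exact (key _ fun _ => ⟨by linarith, by linarith⟩).2 fun _ => ⟨by linarith, le_rfl⟩

lemma sGeom_openCube_eq [NeZero n] {β T : ℝ} (hβ : 0 < β) (hl : 0 < l) (hT : 0 < T)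
    (hTl : 2 * T = √n * (l - 2 * max (T - 1 / β) 0)) : sGeom (openCube n l) β = T := by
  have hmono : StrictMono fun t => 2 * t + 2 * √n * max (t - 1 / β) 0 :=
    (strictMono_mul_left_of_pos two_pos).add_monotone fun _ _ h => by gcongr
  have : {t | admissible (openCube n l) β t} = Ioc 0 T := by
    ext t
    rw [mem_ofPred_eq, admissible_openCube_iff hβ hl, mem_Ioc]
    refine and_congr_right fun _ => ?_
    rw [← hmono.le_iff_le (a := t) (b := T)]
    constructor <;> intro h <;> linarith
  rw [sGeom, this, csSup_Ioc hT]

end Cube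

theorem sGeom_of_square
    (β l : ℝ) (hβ : 0 < β) (hl : 0 < l)
    (Ω : Set (EuclideanSpace ℝ (Fin 2)))
    (hΩ : Ω = {p : EuclideanSpace ℝ (Fin 2) | p 0 ∈ Ioo (0:ℝ) l ∧ p 1 ∈ Ioo (0:ℝ) l}) :
    (Real.sqrt 2 / l ≤ β → sGeom Ω β = (2 + β * l) / ((2 + Real.sqrt 2) * β)) ∧
    (β < Real.sqrt 2 / l → sGeom Ω β = l / Real.sqrt 2) := by
  obtain rfl : Ω = openCube 2 l := by
    rw [hΩ]; ext p; simp [openCube, Fin.forall_fin_two]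
  have hs : √2 ^ 2 = 2 := Real.sq_sqrt zero_le_two
  refine ⟨fun hb => sGeom_openCube_eq hβ hl (by positivity) ?_,
    fun hb => sGeom_openCube_eq hβ hl (by positivity) ?_⟩ <;> push_cast
  · have hβl : √2 ≤ β * l := (div_le_iff₀ hl).1 hb
    have hexcess : (2 + β * l) / ((2 + √2) * β) - 1 / β = (β * l - √2) / ((2 + √2) * β) := by
      field_simp; ring
    rw [hexcess, max_eq_left (by have := sub_nonneg.2 hβl; positivity)]
    field_simp
    linear_combination -(β * l + 2) * hs
  · have hβl : β * l < √2 := (lt_div_iff₀ hl).1 hb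
    rw [max_eq_right]
    · field_simp
      linear_combination -l * hs
    · rw [sub_nonpos, div_le_div_iff₀ (by positivity) hβ]
      linarith
end
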